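/- arXiv:1504.04868 — 10 statements merged into one kernel-verified Lean document; each statement's English description precedes it below -/
import Mathlib

section
/- Let D be a finite dimensional division algebra over a field k with center ℓ, and suppose the characteristic of k does not divide dim_ℓ D. Then the identity element 1 of D does not belong to the commutator subspace [D,D]. -/
open TensorProduct Module

/-- The `k`-subspace of `A` spanned by all commutators `a*b - b*a`. -/
def commutatorSubmodule (k A : Type*) [CommRing k] [Ring A] [Algebra k A] :
    Submodule k A := Submodule.span k {x : A | ∃ a b : A, x = a * b - b * a}

section aux

variable (k D : Type*) [Field k] [DivisionRing D] [Algebra k D]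

theorem center_inv_mem {a : D} (ha : a ∈ Subalgebra.center k D) :
    a⁻¹ ∈ Subalgebra.center k D := by
  rcases eq_or_ne a 0 with rfl | h
  · simpa using Subalgebra.zero_mem _
  refine Subalgebra.mem_center_iff.2 fun b => ?_
  have hc := Subalgebra.mem_center_iff.1 ha
  have key : a * (b * a⁻¹) = b := by
    rw [← mul_assoc, ← hc b, mul_assoc, mul_inv_cancel₀ h, mul_one]
  calc b * a⁻¹ = a⁻¹ * (a * (b * a⁻¹)) := by
        rw [← mul_assoc, inv_mul_cancel₀ h, one_mul]
    _ = a⁻¹ * b := by rw [key]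

noncomputable instance : Field (Subalgebra.center k D) where
  inv a := ⟨(a : D)⁻¹, center_inv_mem k D a.2⟩
  mul_inv_cancel _ ha := Subtype.ext <| mul_inv_cancel₀ <| Subtype.coe_injective.ne ha
  div a b := ⟨(a : D) * (b : D)⁻¹, Subalgebra.mul_mem _ a.2 (center_inv_mem k D b.2)⟩
  div_eq_mul_inv _ _ := rfl
  inv_zero := Subtype.ext inv_zero
  nnqsmul := _
  nnqsmul_def := fun _ _ => rfl
  qsmul := _
  qsmul_def := fun _ _ => rfl

/-- Left multiplication by `a : D`, as an endomorphism of `D` linear over the center. -/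
def lmulCenter (a : D) : D →ₗ[Subalgebra.center k D] D where
  toFun x := a * x
  map_add' x y := mul_add a x y
  map_smul' s x := by
    have hs : ∀ y : D, s • y = (s : D) * y := fun y => rfl
    simp only [RingHom.id_apply, hs]
    rw [← mul_assoc, Subalgebra.mem_center_iff.1 s.2 a, mul_assoc]

theorem lmulCenter_mul (a b : D) :
    lmulCenter k D (a * b) = lmulCenter k D a * lmulCenter k D b :=
  LinearMap.ext fun x => mul_assoc a b x

theorem lmulCenter_sub (a b : D) :
    lmulCenter k D (a - b) = lmulCenter k D a - lmulCenter k D b :=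
  LinearMap.ext fun x => sub_mul a b x

theorem lmulCenter_one : lmulCenter k D 1 = 1 :=
  LinearMap.ext fun x => one_mul x

end aux

set_option synthInstance.maxHeartbeats 1000000 in
set_option maxHeartbeats 1000000 in
/-- If char k does not divide dim_ℓ D, then 1 ∉ [D,D]. -/
theorem one_not_mem_commutator (k D : Type*) [Field k] [DivisionRing D] [Algebra k D]
    [FiniteDimensional k D]
    (hchar : ¬ ringChar k ∣ Module.finrank (Subalgebra.center k D) D) :
    (1 : D) ∉ commutatorSubmodule k D := by
  set ℓ := Subalgebra.center k D with hℓ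
  haveI : Module.Finite ℓ D := Module.Finite.of_restrictScalars_finite k ℓ D
  -- the trace form `t a = Tr(x ↦ a * x)`, as a `k`-linear map `D →ₗ[k] ℓ`
  let t : D →ₗ[k] ℓ :=
    { toFun := fun a => LinearMap.trace ℓ D (lmulCenter k D a)
      map_add' := fun a b => by
        show LinearMap.trace ℓ D (lmulCenter k D (a + b))
          = LinearMap.trace ℓ D (lmulCenter k D a) + LinearMap.trace ℓ D (lmulCenter k D b)
        rw [show lmulCenter k D (a + b) = lmulCenter k D a + lmulCenter k D b from
          LinearMap.ext fun x => add_mul a b x, map_add]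
      map_smul' := fun c a => by
        show LinearMap.trace ℓ D (lmulCenter k D (c • a))
          = c • LinearMap.trace ℓ D (lmulCenter k D a)
        have hc : algebraMap k D c ∈ ℓ :=
          Subalgebra.mem_center_iff.2 fun b => (Algebra.commutes c b).symm
        have h1 : lmulCenter k D (c • a) = (⟨algebraMap k D c, hc⟩ : ℓ) • lmulCenter k D a := by
          refine LinearMap.ext fun x => ?_
          show (c • a) * x = (⟨algebraMap k D c, hc⟩ : ℓ) • (a * x)
          show (c • a) * x = algebraMap k D c * (a * x)
          rw [Algebra.smul_def, mul_assoc]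
        rw [h1, map_smul]
        refine Subtype.ext ?_
        show (algebraMap k D c) * _ = (c • (LinearMap.trace ℓ D (lmulCenter k D a)) : ℓ)
        rw [show ((c • (LinearMap.trace ℓ D (lmulCenter k D a)) : ℓ) : D)
            = c • ((LinearMap.trace ℓ D (lmulCenter k D a) : ℓ) : D) from rfl, Algebra.smul_def] }
  have hker : commutatorSubmodule k D ≤ LinearMap.ker t := by
    rw [commutatorSubmodule, Submodule.span_le]
    rintro x ⟨a, b, rfl⟩
    simp only [SetLike.mem_coe, LinearMap.mem_ker]
    show LinearMap.trace ℓ D (lmulCenter k D (a * b - b * a)) = 0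
    rw [lmulCenter_sub, map_sub, lmulCenter_mul, lmulCenter_mul,
      LinearMap.trace_mul_comm, sub_self]
  intro h1
  have h0 : t 1 = 0 := hker h1
  have hTr : t 1 = (Module.finrank ℓ D : ℓ) := by
    show LinearMap.trace ℓ D (lmulCenter k D 1) = _
    rw [lmulCenter_one, LinearMap.trace_one]
  rw [hTr] at h0
  haveI : CharP ℓ (ringChar k) :=
    charP_of_injective_ringHom (algebraMap k ℓ).injective (ringChar k)
  exact hchar ((CharP.cast_eq_zero_iff ℓ (ringChar k) _).1 h0)
end

section
/- Let D be a finite dimensional division algebra over a field k with center ℓ, such that char k does not divide dim_ℓ D. Then there exists a k-linear map μ : D → k with μ(1) ≠ 0 and μ(ab) = μ(ba) for all a,b ∈ D. -/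
open TensorProduct Module

section Aux

variable (k D : Type*) [Field k] [DivisionRing D] [Algebra k D]

/-- `D` is an algebra over its center. -/
noncomputable instance centerAlgebraAux : Algebra (Subalgebra.center k D) D :=
  Algebra.ofModule smul_mul_assoc (fun r x y => by
    obtain ⟨r, hr⟩ := r
    show x * (r * y) = r * (x * y)
    rw [← mul_assoc, (Subalgebra.mem_center_iff.mp hr x), mul_assoc])

/-- The center of a division algebra is a field. -/
noncomputable instance centerFieldAux : Field (Subalgebra.center k D) := by
  apply IsField.toField
  refine ⟨exists_pair_ne _, mul_comm, ?_⟩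
  rintro ⟨x, hx⟩ ha
  have hx0 : x ≠ 0 := by simpa [Subtype.ext_iff] using ha
  refine ⟨⟨x⁻¹, Subalgebra.mem_center_iff.mpr fun b => ?_⟩, ?_⟩
  · have h := Subalgebra.mem_center_iff.mp hx b
    apply mul_left_cancel₀ hx0
    rw [← mul_assoc, ← mul_assoc, ← h, mul_assoc, mul_inv_cancel₀ hx0, mul_one, one_mul]
  · exact Subtype.ext (mul_inv_cancel₀ hx0)

end Aux

/-- If char k does not divide dim_ℓ D, there is a symmetric linear functional μ on D
with μ(1) ≠ 0. -/
theorem exists_symmetric_functional (k D : Type*) [Field k] [DivisionRing D] [Algebra k D]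
    [FiniteDimensional k D]
    (hchar : ¬ ringChar k ∣ Module.finrank (Subalgebra.center k D) D) :
    ∃ μ : D →ₗ[k] k, μ 1 ≠ 0 ∧ ∀ a b : D, μ (a * b) = μ (b * a) := by
  letI ℓ := Subalgebra.center k D
  haveI : FiniteDimensional ℓ D := FiniteDimensional.right k ℓ D
  let μ0 : D →ₗ[ℓ] ℓ := (LinearMap.trace ℓ D) ∘ₗ (LinearMap.mul ℓ D)
  have h1 : μ0 1 = (finrank ℓ D : ℓ) := by
    have : LinearMap.mul ℓ D 1 = LinearMap.id := by ext x; simp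
    simp [μ0, this]
  have hsym : ∀ a b : D, μ0 (a * b) = μ0 (b * a) := by
    intro a b
    have ha : ∀ x y : D, LinearMap.mul ℓ D (x * y)
        = LinearMap.mul ℓ D x * LinearMap.mul ℓ D y := by
      intro x y; ext z; simp [mul_assoc]
    simp only [μ0, LinearMap.comp_apply, ha]
    exact LinearMap.trace_mul_comm ℓ _ _
  have hne : μ0 1 ≠ 0 := by
    rw [h1]
    haveI : CharP ℓ (ringChar k) :=
      charP_of_injective_algebraMap (algebraMap k ℓ).injective (ringChar k)
    exact fun h => hchar ((CharP.cast_eq_zero_iff ℓ (ringChar k) _).mp h)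
  have hlam : ∃ lam : ℓ →ₗ[k] k, lam (μ0 1) ≠ 0 := by
    by_contra h
    push_neg at h
    exact hne ((Module.forall_dual_apply_eq_zero_iff k _).mp h)
  obtain ⟨lam, hlam⟩ := hlam
  exact ⟨lam ∘ₗ (μ0.restrictScalars k), hlam, fun a b => by
    simp only [LinearMap.comp_apply, LinearMap.restrictScalars_apply, hsym a b]⟩
end

section
/- Let A be a finite dimensional G-graded division algebra over a field k with support G, and suppose char k does not divide dim_ℓ A, where ℓ is the center of A_e. Then A is graded symmetric: there exists a k-linear map λ̄ : A → k with λ̄(xy) = λ̄(yx) for all x,y ∈ A, λ̄(A_g) = 0 for all g ≠ e, and ker λ̄ contains no nonzero graded left ideal of A. -/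
open Module

/-- A left ideal of a `G`-graded algebra is graded if it is generated by its
homogeneous elements. -/
def IsGradedLeftIdeal {k A G : Type*} [Field k] [Ring A] [Algebra k A]
    (𝒜 : G → Submodule k A) (I : Submodule A A) : Prop :=
  I = Submodule.span A ((I : Set A) ∩ ⋃ g, (𝒜 g : Set A))

/-- A `G`-graded algebra is graded symmetric if it admits a symmetric linear functional
vanishing on all homogeneous components of degree ≠ e, whose kernel contains no
nonzero graded left ideal. -/
def IsGradedSymmetric {k A G : Type*} [Field k] [Ring A] [Algebra k A] [Group G]
    (𝒜 : G → Submodule k A) : Prop :=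
  ∃ lam : A →ₗ[k] k,
    (∀ a b : A, lam (a * b) = lam (b * a)) ∧
    (∀ g : G, g ≠ 1 → ∀ a ∈ 𝒜 g, lam a = 0) ∧
    ∀ I : Submodule A A, IsGradedLeftIdeal 𝒜 I → (∀ x ∈ I, lam x = 0) → I = ⊥

/-- A `G`-graded division algebra: a `G`-grading of `A` in which every nonzero
homogeneous element is invertible. -/
structure IsGradedDivisionAlgebra {k A G : Type*} [Field k] [Ring A] [Algebra k A]
    [Group G] [DecidableEq G] (𝒜 : G → Submodule k A) : Prop where
  mul_mem : ∀ {g h : G} {a b : A}, a ∈ 𝒜 g → b ∈ 𝒜 h → a * b ∈ 𝒜 (g * h)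
  one_mem : (1 : A) ∈ 𝒜 1
  internal : DirectSum.IsInternal 𝒜
  isUnit_of_ne_zero : ∀ g : G, ∀ a ∈ 𝒜 g, a ≠ 0 → IsUnit a
/-- inverse of a homogeneous degree-one unit is homogeneous of degree one -/
lemma aux_inv_mem_one {k A G : Type*} [Field k] [Ring A] [Algebra k A] [Group G]
    [DecidableEq G] (𝒜 : G → Submodule k A) [DirectSum.Decomposition 𝒜]
    (hone : (1 : A) ∈ 𝒜 1)
    (hmul : ∀ {g h : G} {a b : A}, a ∈ 𝒜 g → b ∈ 𝒜 h → a * b ∈ 𝒜 (g * h))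
    (u : Aˣ) (hu : (u : A) ∈ 𝒜 1) : ((u⁻¹ : Aˣ) : A) ∈ 𝒜 1 := by
  classical
  set b : A := ((u⁻¹ : Aˣ) : A) with hbdef
  have hb : ∀ h : G, h ≠ 1 → (DirectSum.decompose 𝒜 b h : A) = 0 := by
    intro h hh
    by_cases hmem : h ∈ (DirectSum.decompose 𝒜 b).support
    · have hab : ∀ i : G, (u : A) * (DirectSum.decompose 𝒜 b i : A) ∈ 𝒜 i := fun i => by
        simpa using hmul hu (DirectSum.decompose 𝒜 b i).2
      have e1 : (DirectSum.decompose 𝒜 ((u : A) * b) h : A) =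
          ∑ i ∈ (DirectSum.decompose 𝒜 b).support,
            (DirectSum.decompose 𝒜 ((u : A) * (DirectSum.decompose 𝒜 b i : A)) h : A) := by
        conv_lhs => rw [← DirectSum.sum_support_decompose 𝒜 b, Finset.mul_sum]
        rw [DirectSum.decompose_sum, DFinsupp.finset_sum_apply, AddSubmonoidClass.coe_finset_sum]
      have e3 : (DirectSum.decompose 𝒜 ((u : A) * b) h : A) = 0 := by
        rw [hbdef, Units.mul_inv]
        exact DirectSum.decompose_of_mem_ne 𝒜 hone (Ne.symm hh)
      rw [e3] at e1
      rw [Finset.sum_eq_single_of_mem h hmem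
        (fun i _ hih => DirectSum.decompose_of_mem_ne 𝒜 (hab i) hih)] at e1
      rw [DirectSum.decompose_of_mem_same 𝒜 (hab h)] at e1
      have h2 := congrArg (fun z => ((u⁻¹ : Aˣ) : A) * z) e1.symm
      simpa [Units.inv_mul_cancel_left] using h2
    · rw [DFinsupp.notMem_support_iff.mp hmem]
      rfl
  rw [← DirectSum.sum_support_decompose 𝒜 b]
  refine Submodule.sum_mem _ fun i _ => ?_
  rcases eq_or_ne i 1 with rfl | hne
  · exact (DirectSum.decompose 𝒜 b 1).2
  · rw [hb i hne]; exact (𝒜 1).zero_mem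

set_option maxHeartbeats 2000000 in
set_option synthInstance.maxHeartbeats 400000 in
/-- Theorem 2.6: a finite dimensional -graded division algebra with support 
such that , where  is the center of , is graded symmetric. -/
theorem gradedDivisionAlgebra_isGradedSymmetric {k A G : Type*} [Field k] [Ring A]
    [Algebra k A] [Group G] [DecidableEq G] [Finite G] [FiniteDimensional k A]
    (𝒜 : G → Submodule k A) (hA : IsGradedDivisionAlgebra 𝒜)
    (hsupp : ∀ g : G, 𝒜 g ≠ ⊥)
    (ℓ : Subalgebra k A)
    (hℓ : (ℓ : Set A) = {c : A | c ∈ 𝒜 1 ∧ ∀ d ∈ 𝒜 1, c * d = d * c})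
    (hchar : ¬ ringChar k ∣ Module.finrank ℓ A) :
    IsGradedSymmetric 𝒜 := by
  classical
  letI : DirectSum.Decomposition 𝒜 := hA.internal.chooseDecomposition
  have memℓ : ∀ x : A, x ∈ ℓ ↔ x ∈ 𝒜 1 ∧ ∀ d ∈ 𝒜 1, x * d = d * x := by
    intro x
    rw [← SetLike.mem_coe, hℓ]
    exact Iff.rfl
  -- ℓ is commutative
  have hcomm : ∀ c d : ℓ, c * d = d * c := by
    intro c d
    exact Subtype.ext (((memℓ c).1 c.2).2 (d : A) ((memℓ d).1 d.2).1)
  letI : CommRing ℓ := { (inferInstance : Ring ℓ) with mul_comm := hcomm }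
  haveI : Nontrivial A := by
    by_contra h
    rw [not_nontrivial_iff_subsingleton] at h
    exact hsupp 1 (Subsingleton.elim _ _)
  haveI : Nontrivial ℓ :=
    ⟨⟨0, 1, fun h => (one_ne_zero (α := A)) (congrArg Subtype.val h).symm⟩⟩
  letI : Field ℓ := Field.ofIsUnitOrEqZero (by
    intro c
    rcases eq_or_ne c 0 with rfl | hc
    · exact Or.inr rfl
    refine Or.inl ?_
    obtain ⟨hc1, hcc⟩ := (memℓ (c : A)).1 c.2
    have hc0 : (c : A) ≠ 0 := fun h => hc (Subtype.ext h)
    obtain ⟨u, hu⟩ := hA.isUnit_of_ne_zero 1 (c : A) hc1 hc0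
    have hbmem : ((u⁻¹ : Aˣ) : A) ∈ 𝒜 1 :=
      aux_inv_mem_one 𝒜 hA.one_mem hA.mul_mem u (hu ▸ hc1)
    set b : A := ((u⁻¹ : Aˣ) : A) with hbdef
    have hab : (c : A) * b = 1 := by rw [hbdef, ← hu]; exact u.mul_inv
    have hba : b * (c : A) = 1 := by rw [hbdef, ← hu]; exact u.inv_mul
    have hbl : b ∈ ℓ := by
      refine (memℓ b).2 ⟨hbmem, fun d hd => ?_⟩
      have h1 : (c : A) * d = d * (c : A) := hcc d hd
      calc b * d = b * d * ((c : A) * b) := by rw [hab, mul_one]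
        _ = b * (d * (c : A)) * b := by simp only [mul_assoc]
        _ = b * ((c : A) * d) * b := by rw [← h1]
        _ = (b * (c : A)) * (d * b) := by simp only [mul_assoc]
        _ = d * b := by rw [hba, one_mul]
    exact ⟨⟨c, ⟨b, hbl⟩, Subtype.ext hab, Subtype.ext hba⟩, rfl⟩)
  haveI : Module.Finite ℓ A := Module.Finite.of_restrictScalars_finite k ℓ A
  haveI : IsNoetherian ℓ A := inferInstance
  -- ℓ-submodule version of the grading
  have hsmulB : ∀ (g : G) (c : ℓ) (x : A), x ∈ 𝒜 g → (c : A) * x ∈ 𝒜 g := by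
    intro g c x hx
    simpa using hA.mul_mem ((memℓ (c : A)).1 c.2).1 hx
  let ℬ : G → Submodule ℓ A := fun g =>
    { carrier := 𝒜 g
      add_mem' := fun ha hb => (𝒜 g).add_mem ha hb
      zero_mem' := (𝒜 g).zero_mem
      smul_mem' := fun c x hx => hsmulB g c x hx }
  have hBint : DirectSum.IsInternal ℬ := hA.internal
  -- the functional f on ℓ
  have h1ne : (1 : ℓ) ≠ 0 := one_ne_zero
  obtain ⟨f, hf⟩ := LinearMap.exists_extend
    ((LinearEquiv.toSpanNonzeroSingleton k ℓ 1 h1ne).symm.toLinearMap)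
  have hf1 : f 1 = 1 := by
    have h2 := LinearMap.congr_fun hf ((LinearEquiv.toSpanNonzeroSingleton k ℓ 1 h1ne) 1)
    have h3 : (((LinearEquiv.toSpanNonzeroSingleton k ℓ 1 h1ne) 1 : Submodule.span k {(1:ℓ)}) : ℓ)
        = 1 := by
      simp [LinearEquiv.toSpanNonzeroSingleton]
    simp only [LinearMap.comp_apply, Submodule.subtype_apply, h3,
      LinearEquiv.coe_toLinearMap, LinearEquiv.symm_apply_apply] at h2
    simpa using h2
  -- right multiplication operators
  let ρ : A → Module.End ℓ A := fun x =>
    { toFun := fun a => a * x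
      map_add' := fun a b => add_mul a b x
      map_smul' := fun c a => by
        show ((c : A) * a) * x = (c : A) * (a * x)
        exact mul_assoc _ _ _ }
  let lam : A →ₗ[k] k :=
    { toFun := fun x => f (LinearMap.trace ℓ A (ρ x))
      map_add' := fun x y => by
        have h : ρ (x + y) = ρ x + ρ y := LinearMap.ext fun a => mul_add a x y
        simp only [h, map_add]
      map_smul' := fun r x => by
        have h : ρ (r • x) = (r • (1 : ℓ)) • ρ x := LinearMap.ext fun a => by
          show a * (r • x) = (r • (1 : ℓ)) • (a * x)
          show a * (r • x) = ((r • (1 : ℓ) : ℓ) : A) * (a * x)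
          rw [Subalgebra.coe_smul, OneMemClass.coe_one, mul_smul_comm, smul_mul_assoc, one_mul]
        simp only [h, map_smul, smul_eq_mul, smul_mul_assoc, one_mul]
        rfl }
  have hlam1 : lam 1 = (Module.finrank ℓ A : k) := by
    show f (LinearMap.trace ℓ A (ρ 1)) = _
    have h : ρ 1 = LinearMap.id := LinearMap.ext fun a => mul_one a
    rw [h, ← Module.End.one_eq_id, LinearMap.trace_one]
    have h2 : ((Module.finrank ℓ A : ℓ)) = (Module.finrank ℓ A) • (1 : ℓ) := by simp
    rw [h2, map_nsmul, hf1]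
    simp
  have hlam1ne : lam 1 ≠ 0 := by
    rw [hlam1]
    intro h
    exact hchar ((ringChar.spec k _).mp h)
  refine ⟨lam, ?_, ?_, ?_⟩
  · intro a b
    have h1 : ρ (a * b) = ρ b * ρ a := LinearMap.ext fun z => (mul_assoc z a b).symm
    have h2 : ρ (b * a) = ρ a * ρ b := LinearMap.ext fun z => (mul_assoc z b a).symm
    show f (LinearMap.trace ℓ A (ρ (a * b))) = f (LinearMap.trace ℓ A (ρ (b * a)))
    rw [h1, h2, LinearMap.trace_mul_comm]
  · intro g hg x hx
    show f (LinearMap.trace ℓ A (ρ x)) = 0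
    have h : LinearMap.trace ℓ A (ρ x) = 0 := by
      refine LinearMap.trace_eq_zero_of_mapsTo_ne hBint (fun h => h * g)
        (fun h => fun e => hg (by simpa using e)) (fun h a ha => ?_)
      exact hA.mul_mem ha hx
    rw [h, map_zero]
  · intro I hI hvan
    by_contra hne
    have hex : ∃ x ∈ (I : Set A) ∩ ⋃ g, ((𝒜 g : Submodule k A) : Set A), x ≠ 0 := by
      by_contra h
      push_neg at h
      exact hne (hI.trans (Submodule.span_eq_bot.mpr h))
    obtain ⟨x, ⟨hxI, hxhom⟩, hx0⟩ := hex
    obtain ⟨g, hg⟩ : ∃ g, x ∈ 𝒜 g := by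
      simpa using hxhom
    obtain ⟨u, hu⟩ := hA.isUnit_of_ne_zero g x hg hx0
    have h1I : (1 : A) ∈ I := by
      have h2 := I.smul_mem ((u⁻¹ : Aˣ) : A) hxI
      rw [smul_eq_mul, ← hu, u.inv_mul] at h2
      exact h2
    exact hlam1ne (hvan 1 h1I)
end

section
/- Let A be a finite dimensional G-graded division algebra over a field k such that Cen(A_e) = A_e ∩ Cen(A). Then A is graded symmetric. -/
open Module

/-!
The degree-one component `D = A_e` is a finite-dimensional division algebra, central over its
centre `Z`, so `D ⊗_Z Dᵐᵒᵖ ≅ End_Z D`. Through this isomorphism a `Z`-automorphism `σ` of `D`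
becomes an automorphism of `End_Z D`, i.e. conjugation by a linear automorphism, so the functional
`x ↦ tr_Z (y ↦ x * y * c)` is `σ`-invariant; for a suitable `c` it is nonzero. Since
`Cen(A_e) ⊆ Cen(A)`, conjugation by a homogeneous unit is such a `σ`, which turns invariance into
`λ(ab) = λ(ba)` for `a ∈ A_g`, `b ∈ A_{g⁻¹}`. Precomposing with the projection `A → A_e` and
postcomposing with a `k`-linear functional on `Z` gives `λ`. A nonzero graded left ideal contains a
homogeneous unit, hence is all of `A`, so `λ ≠ 0` already rules it out of `ker λ`.
-/

open LinearMap MulOpposite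
open scoped TensorProduct

section CentralCoefficients

variable {Z D : Type*} [CommRing Z] [Ring D] [Algebra Z D] [Algebra.IsCentral Z D]

theorem Algebra.IsCentral.eq_zero_of_sum_mul_eq_zero {ι : Type*} {s : Finset ι} {a c : ι → D}
    (hc : LinearIndepOn Z c s) (ha : ∀ i ∈ s, a i ∈ Subalgebra.center Z D)
    (h : ∑ i ∈ s, a i * c i = 0) : ∀ i ∈ s, a i = 0 := by
  choose! z hz using fun i hi => (Algebra.IsCentral.mem_center_iff Z).mp (ha i hi)
  have hzc : ∑ i ∈ s, z i • c i = 0 := by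
    rw [← h]
    exact Finset.sum_congr rfl fun i hi => by rw [hz i hi, Algebra.smul_def]
  intro i hi
  rw [hz i hi, linearIndepOn_iff'.mp hc s z subset_rfl hzc i hi, map_zero]

end CentralCoefficients

namespace Module.End

theorem trace_algEquiv {K V : Type*} [Field K] [AddCommGroup V] [Module K V]
    (Θ : End K V ≃ₐ[K] End K V) (f : End K V) : trace K V (Θ f) = trace K V f := by
  obtain ⟨T, rfl⟩ := Θ.eq_linearEquivConjAlgEquiv
  exact trace_conj' f T

end Module.End

section CentralDivisionAlgebra

variable (Z : Type*) {D : Type*} [Field Z] [DivisionRing D] [Algebra Z D]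

/-- `x ↦ tr_Z (y ↦ x * y * c)`. The untwisted `x ↦ tr_Z (y ↦ x * y)` may vanish identically in
positive characteristic; some twist `c` does not (`exists_traceMulLeftRight_ne_zero`). -/
noncomputable def traceMulLeftRight (c : D) : D →ₗ[Z] Z :=
  trace Z D ∘ₗ llcomp Z D D D (mulRight Z c) ∘ₗ LinearMap.mul Z D

variable {Z}

theorem traceMulLeftRight_apply (c x : D) :
    traceMulLeftRight Z c x = trace Z D (AlgHom.mulLeftRight Z D (x ⊗ₜ op c)) := by
  change trace Z D (mulRight Z c ∘ₗ LinearMap.mul Z D x) = _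
  congr 1
  ext
  simp

variable [Algebra.IsCentral Z D]

theorem Algebra.IsCentral.eq_zero_of_forall_sum_mul_mul_eq_zero {ι : Type*} [DecidableEq ι]
    (s : Finset ι) {a c : ι → D} (hc : LinearIndepOn Z c s)
    (h : ∀ x, ∑ i ∈ s, a i * x * c i = 0) : ∀ i ∈ s, a i = 0 := by
  induction s using Finset.strongInduction generalizing a with
  | H s ih =>
  by_contra! ⟨i₀, hi₀, ha₀⟩
  -- Normalise to `b i₀ = 1`; commutators with any `d` then kill the `i₀`-term, so by induction
  -- every `b i` is central, which contradicts the independence of the `c i`.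
  set b : ι → D := fun i => (a i₀)⁻¹ * a i with hb
  have hb₀ : b i₀ = 1 := inv_mul_cancel₀ ha₀
  have hbrel : ∀ x, ∑ i ∈ s, b i * x * c i = 0 := fun x => by
    simp only [hb, mul_assoc, ← Finset.mul_sum]
    simp only [← mul_assoc, h, mul_zero]
  have hcomm : ∀ d x, ∑ i ∈ s.erase i₀, (d * b i - b i * d) * x * c i = 0 := fun d x => by
    have e : ∀ i, (d * b i - b i * d) * x * c i = d * (b i * x * c i) - b i * (d * x) * c i :=
      fun i => by noncomm_ring
    rw [Finset.sum_erase _ (by simp [hb₀])]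
    simp only [e, Finset.sum_sub_distrib, ← Finset.mul_sum, hbrel, mul_zero, sub_zero]
  have hcentral : ∀ i ∈ s, b i ∈ Subalgebra.center Z D := by
    intro i hi
    rw [Subalgebra.mem_center_iff]
    intro d
    rcases eq_or_ne i i₀ with rfl | hne
    · simp [hb₀]
    exact sub_eq_zero.mp <| ih (s.erase i₀) (Finset.erase_ssubset hi₀)
      (hc.mono (by simp)) (hcomm d) i (Finset.mem_erase.mpr ⟨hne, hi⟩)
  have hb₀' := Algebra.IsCentral.eq_zero_of_sum_mul_eq_zero hc hcentral
    (by simpa using hbrel 1) i₀ hi₀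
  exact one_ne_zero (hb₀ ▸ hb₀')

theorem Algebra.IsCentral.mulLeftRight_injective :
    Function.Injective (AlgHom.mulLeftRight Z D) := by
  rw [injective_iff_map_eq_zero]
  intro t ht
  let b := Basis.ofVectorSpace Z D
  obtain ⟨a, rfl⟩ := TensorProduct.eq_repr_basis_right (b.map (opLinearEquiv Z)) t
  have ha : ∀ i ∈ a.support, a i = 0 := by
    classical
    refine eq_zero_of_forall_sum_mul_mul_eq_zero a.support (b.linearIndependent.linearIndepOn _)
      fun x => ?_
    simpa [Finsupp.sum] using congr($ht x)
  obtain rfl : a = 0 := Finsupp.support_eq_empty.mp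
    (Finset.eq_empty_of_forall_notMem fun i hi => Finsupp.mem_support_iff.mp hi (ha i hi))
  simp

theorem Algebra.IsCentral.mulLeftRight_bijective [FiniteDimensional Z D] :
    Function.Bijective (AlgHom.mulLeftRight Z D) := by
  have hrank : finrank Z (D ⊗[Z] Dᵐᵒᵖ) = finrank Z (End Z D) := by
    rw [finrank_tensorProduct, finrank_linearMap, MulOpposite.finrank]
  refine ⟨mulLeftRight_injective, ?_⟩
  exact (injective_iff_surjective_of_finrank_eq_finrank hrank
    (f := (AlgHom.mulLeftRight Z D).toLinearMap)).mp mulLeftRight_injective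

variable [FiniteDimensional Z D]

theorem traceMulLeftRight_algEquiv (σ : D ≃ₐ[Z] D) (c x : D) :
    traceMulLeftRight Z c (σ x) = traceMulLeftRight Z c x := by
  let e := AlgEquiv.ofBijective _ (Algebra.IsCentral.mulLeftRight_bijective (Z := Z) (D := D))
  let Θ := e.symm.trans ((Algebra.TensorProduct.congr σ AlgEquiv.refl).trans e)
  have hΘ : Θ (AlgHom.mulLeftRight Z D (x ⊗ₜ op c)) =
      AlgHom.mulLeftRight Z D (σ x ⊗ₜ op c) := by
    rw [show AlgHom.mulLeftRight Z D (x ⊗ₜ op c) = e (x ⊗ₜ op c) from rfl]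
    simp [Θ, e]
  rw [traceMulLeftRight_apply, traceMulLeftRight_apply, ← hΘ, Module.End.trace_algEquiv]

theorem exists_traceMulLeftRight_ne_zero : ∃ c : D, traceMulLeftRight Z c ≠ 0 := by
  by_contra! h
  obtain ⟨φ, hφ⟩ := Projective.exists_dual_eq_one Z (one_ne_zero (α := D))
  obtain ⟨t, ht⟩ := (Algebra.IsCentral.mulLeftRight_bijective (Z := Z) (D := D)).2 (φ.smulRight 1)
  have htrace : ∀ t, trace Z D (AlgHom.mulLeftRight Z D t) = 0 := by
    intro t
    induction t using TensorProduct.induction_on with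
    | zero => simp
    | tmul x c => simpa [traceMulLeftRight_apply] using congr($(h c.unop) x)
    | add t t' ht ht' => simp [ht, ht']
  simpa [ht, hφ] using htrace t

end CentralDivisionAlgebra

section Center

variable {R A : Type*} [CommSemiring R] [Semiring A] [Algebra R A]

instance : Algebra (Subalgebra.center R A) A where
  algebraMap := (Subalgebra.center R A).val.toRingHom
  commutes' z x := (Subalgebra.mem_center_iff.mp z.2 x).symm
  smul_def' _ _ := rfl

instance : Algebra.IsCentral (Subalgebra.center R A) A where
  out x hx := ⟨⟨x, Subalgebra.mem_center_iff.mpr (Subalgebra.mem_center_iff.mp hx)⟩, rfl⟩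

end Center

section CenterOfDivisionRing

variable {k D : Type*} [Field k] [DivisionRing D] [Algebra k D]

noncomputable instance inst_s7 : Field (Subalgebra.center k D) :=
  Field.ofIsUnitOrEqZero fun z => by
    rcases eq_or_ne z 0 with rfl | hz
    · exact Or.inr rfl
    have hz' : (z : D) ≠ 0 := fun h => hz (Subtype.ext h)
    exact Or.inl ⟨⟨z, ⟨(z : D)⁻¹, Set.inv_mem_center z.2⟩, Subtype.ext (mul_inv_cancel₀ hz'),
      Subtype.ext (inv_mul_cancel₀ hz')⟩, rfl⟩

instance [FiniteDimensional k D] : FiniteDimensional (Subalgebra.center k D) D :=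
  Module.Finite.of_restrictScalars_finite k _ D

end CenterOfDivisionRing

namespace IsGradedDivisionAlgebra

variable {k A G : Type*} [Field k] [Ring A] [Algebra k A] [Group G] [DecidableEq G]
  {𝒜 : G → Submodule k A} (hA : IsGradedDivisionAlgebra 𝒜)
include hA

theorem induction_on {motive : A → Prop} (x : A) (mem : ∀ g, ∀ a ∈ 𝒜 g, motive a)
    (zero : motive 0) (add : ∀ x y, motive x → motive y → motive (x + y)) : motive x :=
  Submodule.iSup_induction (motive := motive) 𝒜
    (hA.internal.submodule_iSup_eq_top ▸ Submodule.mem_top) mem zero add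

theorem eq_top_of_isGradedLeftIdeal {I : Submodule A A} (hI : IsGradedLeftIdeal 𝒜 I)
    (hne : I ≠ ⊥) : I = ⊤ := by
  rw [hI, Ne, Submodule.span_eq_bot] at hne
  push Not at hne
  obtain ⟨v, ⟨hvI, hv⟩, hv0⟩ := hne
  obtain ⟨g, hvg⟩ := Set.mem_iUnion.mp hv
  exact Ideal.eq_top_of_isUnit_mem I hvI (hA.isUnit_of_ne_zero g v hvg hv0)

theorem inv_mem {g : G} {u : Aˣ} (hu : (u : A) ∈ 𝒜 g) : ((u⁻¹ : Aˣ) : A) ∈ 𝒜 g⁻¹ := by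
  let _ : DirectSum.Decomposition 𝒜 := hA.internal.chooseDecomposition
  have hshift : ∀ y : A, (DirectSum.decompose 𝒜 (y * u) 1 : A) =
      (DirectSum.decompose 𝒜 y g⁻¹ : A) * u := by
    intro y
    induction y using hA.induction_on with
    | mem h y hy =>
      rcases eq_or_ne h g⁻¹ with rfl | hne
      · rw [DirectSum.decompose_of_mem_same 𝒜 hy,
          DirectSum.decompose_of_mem_same 𝒜 (by simpa using hA.mul_mem hy hu)]
      · rw [DirectSum.decompose_of_mem_ne 𝒜 hy hne, zero_mul,
          DirectSum.decompose_of_mem_ne 𝒜 (hA.mul_mem hy hu)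
            (by rwa [Ne, mul_eq_one_iff_eq_inv])]
    | zero => simp
    | add y z hy hz => simp [add_mul, hy, hz]
  have h1 : (DirectSum.decompose 𝒜 ((u⁻¹ : Aˣ) : A) g⁻¹ : A) * u = 1 := by
    rw [← hshift, u.inv_mul, DirectSum.decompose_of_mem_same 𝒜 hA.one_mem]
  rw [← Units.mul_eq_one_iff_eq_inv.mp h1]
  exact SetLike.coe_mem _

theorem isGradedSymmetric_of_forall_mem (lam : A →ₗ[k] k) (hlam : lam ≠ 0)
    (hvanish : ∀ g ≠ 1, ∀ a ∈ 𝒜 g, lam a = 0)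
    (hsymm : ∀ g, ∀ a ∈ 𝒜 g, ∀ b ∈ 𝒜 g⁻¹, lam (a * b) = lam (b * a)) :
    IsGradedSymmetric 𝒜 := by
  refine ⟨lam, fun a b => ?_, hvanish, fun I hI hker => ?_⟩
  · induction a using hA.induction_on with
    | mem g a ha =>
      induction b using hA.induction_on with
      | mem h b hb =>
        rcases eq_or_ne h g⁻¹ with rfl | hne
        · exact hsymm g a ha b hb
        rw [hvanish _ (by rwa [Ne, mul_eq_one_iff_inv_eq, eq_comm]) _ (hA.mul_mem ha hb),
          hvanish _ (by rwa [Ne, mul_eq_one_iff_eq_inv]) _ (hA.mul_mem hb ha)]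
      | zero => simp
      | add b b' hb hb' => simp [mul_add, add_mul, hb, hb']
    | zero => simp
    | add a a' ha ha' => simp [mul_add, add_mul, ha, ha']
  · by_contra hne
    refine hlam (LinearMap.ext fun x => hker x ?_)
    simp [hA.eq_top_of_isGradedLeftIdeal hI hne]

def degreeOne : Subalgebra k A :=
  (𝒜 1).toSubalgebra hA.one_mem fun {_ _} hx hy => by simpa using hA.mul_mem hx hy

theorem mem_degreeOne {x : A} : x ∈ hA.degreeOne ↔ x ∈ 𝒜 1 := Iff.rfl

noncomputable instance [Nontrivial A] : DivisionRing hA.degreeOne :=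
  DivisionRing.ofIsUnitOrEqZero fun y => by
    rcases eq_or_ne y 0 with rfl | hy
    · exact Or.inr rfl
    let u := (hA.isUnit_of_ne_zero 1 y y.2 (fun h => hy (Subtype.ext h))).unit
    exact Or.inl ⟨⟨y, ⟨_, by simpa [mem_degreeOne] using hA.inv_mem (u := u) y.2⟩,
      Subtype.ext u.mul_inv, Subtype.ext u.inv_mul⟩, rfl⟩

noncomputable def degreeOneProj : A →ₗ[k] hA.degreeOne :=
  let _ : DirectSum.Decomposition 𝒜 := hA.internal.chooseDecomposition
  LinearMap.codRestrict (Subalgebra.toSubmodule hA.degreeOne)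
    ((𝒜 1).subtype ∘ₗ DirectSum.component k G (fun g => 𝒜 g) 1 ∘ₗ
      (DirectSum.decomposeLinearEquiv 𝒜).toLinearMap) fun x => by simp [mem_degreeOne]

theorem degreeOneProj_of_mem_one {a : A} (ha : a ∈ 𝒜 1) :
    hA.degreeOneProj a = ⟨a, ha⟩ := by
  let _ : DirectSum.Decomposition 𝒜 := hA.internal.chooseDecomposition
  exact Subtype.ext (DirectSum.decompose_of_mem_same 𝒜 ha)

theorem degreeOneProj_of_mem_ne {g : G} {a : A} (hg : g ≠ 1) (ha : a ∈ 𝒜 g) :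
    hA.degreeOneProj a = 0 := by
  let _ : DirectSum.Decomposition 𝒜 := hA.internal.chooseDecomposition
  exact Subtype.ext (DirectSum.decompose_of_mem_ne 𝒜 ha hg)

def conjDegreeOne (hcen : ∀ c ∈ 𝒜 1, (∀ d ∈ 𝒜 1, c * d = d * c) → ∀ d, c * d = d * c)
    {g : G} (u : Aˣ) (hu : (u : A) ∈ 𝒜 g) :
    hA.degreeOne ≃ₐ[Subalgebra.center k hA.degreeOne] hA.degreeOne where
  toFun y := ⟨↑u⁻¹ * y * u, hA.mem_degreeOne.mpr <| by
    simpa using hA.mul_mem (hA.mul_mem (hA.inv_mem hu) y.2) hu⟩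
  invFun y := ⟨u * y * ↑u⁻¹, hA.mem_degreeOne.mpr <| by
    simpa using hA.mul_mem (hA.mul_mem hu y.2) (hA.inv_mem hu)⟩
  left_inv y := Subtype.ext (by simp [mul_assoc])
  right_inv y := Subtype.ext (by simp [mul_assoc])
  map_mul' y y' := Subtype.ext (by simp [mul_assoc])
  map_add' y y' := Subtype.ext (by simp [mul_add, add_mul])
  commutes' z := Subtype.ext <| by
    have hz : ∀ d ∈ 𝒜 1, (z : A) * d = d * z := fun d hd =>
      congr(Subtype.val $(Subalgebra.mem_center_iff.mp z.2 ⟨d, hd⟩)).symm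
    change ↑u⁻¹ * ((z : hA.degreeOne) : A) * u = (z : hA.degreeOne)
    rw [mul_assoc, hcen _ (z : hA.degreeOne).2 hz u, ← mul_assoc, u.inv_mul, one_mul]

theorem isGradedSymmetric_of_degreeOne
    (hcen : ∀ c ∈ 𝒜 1, (∀ d ∈ 𝒜 1, c * d = d * c) → ∀ d, c * d = d * c)
    (ψ : hA.degreeOne →ₗ[k] k) (hψ : ψ ≠ 0)
    (hinv : ∀ σ : hA.degreeOne ≃ₐ[Subalgebra.center k hA.degreeOne] hA.degreeOne,
      ∀ y, ψ (σ y) = ψ y) :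
    IsGradedSymmetric 𝒜 := by
  refine hA.isGradedSymmetric_of_forall_mem (ψ ∘ₗ hA.degreeOneProj) ?_
    (fun g hg a ha => by simp [hA.degreeOneProj_of_mem_ne hg ha]) fun g a ha b hb => ?_
  · obtain ⟨y, hy⟩ := DFunLike.ne_iff.mp hψ
    exact DFunLike.ne_iff.mpr ⟨(y : A), by simpa [hA.degreeOneProj_of_mem_one y.2] using hy⟩
  rcases eq_or_ne a 0 with rfl | ha0
  · simp
  let u := (hA.isUnit_of_ne_zero g a ha ha0).unit
  have hab : a * b ∈ 𝒜 1 := by simpa using hA.mul_mem ha hb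
  have hba : b * a ∈ 𝒜 1 := by simpa using hA.mul_mem hb ha
  have hσ : hA.conjDegreeOne hcen u ha ⟨a * b, hab⟩ = ⟨b * a, hba⟩ :=
    Subtype.ext (by simp [conjDegreeOne, u, ← mul_assoc])
  simp only [LinearMap.comp_apply, hA.degreeOneProj_of_mem_one hab,
    hA.degreeOneProj_of_mem_one hba, ← hσ, hinv]

end IsGradedDivisionAlgebra

theorem gradedDivisionAlgebra_isGradedSymmetric_of_center_eq_general {k A G : Type*} [Field k]
    [Ring A] [Algebra k A] [Group G] [DecidableEq G] [FiniteDimensional k A]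
    (𝒜 : G → Submodule k A) (hA : IsGradedDivisionAlgebra 𝒜)
    (hcen : {c : A | c ∈ 𝒜 1 ∧ ∀ d ∈ 𝒜 1, c * d = d * c} =
      {c : A | c ∈ 𝒜 1 ∧ ∀ d : A, c * d = d * c}) :
    IsGradedSymmetric 𝒜 := by
  rcases subsingleton_or_nontrivial A with hA0 | hA0
  · exact ⟨0, by simp, by simp, fun I _ _ => Subsingleton.elim _ _⟩
  obtain ⟨c, hc⟩ := exists_traceMulLeftRight_ne_zero
    (Z := Subalgebra.center k hA.degreeOne) (D := hA.degreeOne)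
  obtain ⟨x, hx⟩ := DFunLike.ne_iff.mp hc
  obtain ⟨θ, hθ⟩ := Projective.exists_dual_ne_zero k hx
  refine hA.isGradedSymmetric_of_degreeOne
    (fun a ha hcomm => ((Set.ext_iff.mp hcen a).mp ⟨ha, hcomm⟩).2)
    (θ ∘ₗ (traceMulLeftRight _ c).restrictScalars k) (DFunLike.ne_iff.mpr ⟨x, hθ⟩) fun σ y => ?_
  simp [traceMulLeftRight_algEquiv]

/-- Theorem 2.8: a finite dimensional -graded division algebra with
 is graded symmetric. -/
theorem gradedDivisionAlgebra_isGradedSymmetric_of_center_eq {k A G : Type*} [Field k]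
    [Ring A] [Algebra k A] [Group G] [DecidableEq G] [Finite G] [FiniteDimensional k A]
    (𝒜 : G → Submodule k A) (hA : IsGradedDivisionAlgebra 𝒜)
    (hcen : {c : A | c ∈ 𝒜 1 ∧ ∀ d ∈ 𝒜 1, c * d = d * c} =
      {c : A | c ∈ 𝒜 1 ∧ ∀ d : A, c * d = d * c}) :
    IsGradedSymmetric 𝒜 :=
  gradedDivisionAlgebra_isGradedSymmetric_of_center_eq_general 𝒜 hA hcen
end

section
/- Let p be a prime, K = F_{p^p} = F_p(x) with x^p = x + 1, and k = F_p. Then the k-subspace V of K spanned by all elements x^u(x+i)^v - x^v(x-i)^u with 0 ≤ u,v,i ≤ p-1 satisfies: x^h ∈ V for all 0 ≤ h ≤ p-2, while x^{p-1} ∉ V; in particular V is a proper subspace of K of codimension 1. -/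
/-!
Let `σ` be the Frobenius and `T = ∑_{j < p} σ^j`. Since `σ^j x = x + j`, we get
`T (g x) = ∑_{a ∈ 𝔽_p} g (x + a)` for every `g ∈ 𝔽_p[X]`. Each generator is `g x - g (x - i)` with
`g = X^u (X + i)^v`, so the translation invariance of sums over `𝔽_p` puts `V` in the kernel of
`T`, whereas `T (x^{p-1}) = ∑_a (x + a)^{p-1} = -1`.

Conversely, expanding `(x + a)^{p-1}` with `C(p-1, k) ≡ (-1)^k` and using that `∑_a a^e` vanishes
for `e < 2(p-1)` unless `e = p-1` (where it is `-1`) gives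
`∑_a a^h ((x + a)^{p-1} - x^{p-1}) = (-1)^{h+1} x^h` for `h ≤ p-2`; the differences
`(x + a)^{p-1} - x^{p-1}` are generators (`u = 0`). Since `x` has degree `p`, these `x^h` are
independent, so `V` has dimension `p - 1`.
-/

open Module Finset Polynomial

namespace FiniteField

variable {K : Type*} [Field K] [Fintype K]

theorem sum_pow_card_sub_one : ∑ a : K, a ^ (Fintype.card K - 1) = -1 := by
  classical
  have hq : 1 < Fintype.card K := Fintype.one_lt_card
  have hunit : ∀ a ∈ univ.erase (0 : K), a ^ (Fintype.card K - 1) = 1 := fun a ha =>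
    pow_card_sub_one_eq_one a (ne_of_mem_erase ha)
  rw [← add_sum_erase _ _ (mem_univ 0), sum_congr rfl hunit, sum_const, zero_pow (by omega),
    card_erase_of_mem (mem_univ _), card_univ, nsmul_one, Nat.cast_sub hq.le,
    cast_card_eq_zero, Nat.cast_one, zero_add, zero_sub]

theorem sum_pow_eq_zero_of_lt {e : ℕ} (he : e < 2 * (Fintype.card K - 1))
    (hne : e ≠ Fintype.card K - 1) : ∑ a : K, a ^ e = 0 := by
  rcases lt_or_gt_of_ne hne with hlt | hgt
  · exact sum_pow_lt_card_sub_one K e hlt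
  have hred : ∀ a : K, a ^ e = a ^ (e - (Fintype.card K - 1)) := by
    intro a
    rcases eq_or_ne a 0 with rfl | ha
    · rw [zero_pow (by omega), zero_pow (by omega)]
    · rw [← mul_one (a ^ (e - _)), ← pow_card_sub_one_eq_one a ha, ← pow_add,
        Nat.sub_add_cancel hgt.le]
  simp_rw [hred]
  exact sum_pow_lt_card_sub_one K _ (by omega)

end FiniteField

namespace ZMod

variable {p : ℕ} [Fact p.Prime]

theorem natCast_choose_sub_one {k : ℕ} (hk : k ≤ p - 1) :
    (((p - 1).choose k : ℕ) : ZMod p) = (-1) ^ k := by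
  have hp : p.Prime := Fact.out
  induction k with
  | zero => simp
  | succ k ih =>
    have hpk : ((p.choose (k + 1) : ℕ) : ZMod p) = 0 :=
      (natCast_eq_zero_iff _ _).2 (hp.dvd_choose_self k.succ_ne_zero (by omega))
    have hpascal : p.choose (k + 1) = (p - 1).choose k + (p - 1).choose (k + 1) := by
      simpa [Nat.sub_add_cancel hp.one_le] using Nat.choose_succ_succ (p - 1) k
    rw [hpascal, Nat.cast_add, ih (by omega)] at hpk
    rw [pow_succ]
    linear_combination hpk

end ZMod

section PowerSums

variable {p : ℕ} [Fact p.Prime] {R : Type*} [CommRing R] [Algebra (ZMod p) R]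

theorem add_algebraMap_pow_sub_one (x : R) (c : ZMod p) :
    (x + algebraMap (ZMod p) R c) ^ (p - 1) =
      ∑ k ∈ range p, ((-1) ^ k * c ^ (p - 1 - k)) • x ^ k := by
  have hp : p.Prime := Fact.out
  rw [add_pow, Nat.sub_add_cancel hp.one_le]
  refine sum_congr rfl fun k hk => ?_
  rw [← map_natCast (algebraMap (ZMod p) R),
    ZMod.natCast_choose_sub_one (by have := mem_range.1 hk; omega), Algebra.smul_def]
  simp only [map_mul, map_pow, map_neg, map_one]
  ring

theorem sum_smul_add_algebraMap_pow_sub_one (x : R) {m : ℕ} (hm : m < p - 1) :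
    ∑ a : ZMod p, a ^ m • (x + algebraMap (ZMod p) R a) ^ (p - 1) =
      (-1 : ZMod p) ^ (m + 1) • x ^ m := by
  have inner : ∀ k, ∑ a : ZMod p, a ^ m * ((-1) ^ k * a ^ (p - 1 - k)) =
      (-1) ^ k * ∑ a : ZMod p, a ^ (m + (p - 1 - k)) := by
    intro k
    simp_rw [mul_sum, pow_add]
    exact sum_congr rfl fun a _ => by ring
  simp_rw [add_algebraMap_pow_sub_one, smul_sum, smul_smul]
  rw [sum_comm]
  simp_rw [← sum_smul, inner]
  rw [sum_eq_single m]
  · have htop : ∑ a : ZMod p, a ^ (p - 1) = -1 := by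
      simpa only [ZMod.card] using FiniteField.sum_pow_card_sub_one (K := ZMod p)
    rw [Nat.add_sub_of_le (by omega), htop, pow_succ]
  · intro k hk hkm
    rw [FiniteField.sum_pow_eq_zero_of_lt (by rw [ZMod.card]; have := mem_range.1 hk; omega)
      (by rw [ZMod.card]; omega), mul_zero, zero_smul]
  · intro hm'
    exact absurd (mem_range.2 (by omega)) hm'

theorem neg_one_pow_smul_pow_eq_sum (x : R) {m : ℕ} (hm : m < p - 1) :
    (-1 : ZMod p) ^ (m + 1) • x ^ m =
      ∑ a : ZMod p, a ^ m • ((x + algebraMap (ZMod p) R a) ^ (p - 1) - x ^ (p - 1)) := by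
  rw [← sum_smul_add_algebraMap_pow_sub_one x hm]
  simp_rw [smul_sub]
  rw [sum_sub_distrib, ← sum_smul,
    FiniteField.sum_pow_lt_card_sub_one (ZMod p) m (by rwa [ZMod.card]), zero_smul, sub_zero]

end PowerSums

section FrobeniusOrbit

variable (p : ℕ) [Fact p.Prime] (R : Type*) [CommRing R] [Algebra (ZMod p) R]

/-- `y ↦ ∑_{j < p} y ^ (p ^ j)`, the trace over `𝔽_p` when `R = 𝔽_{p^p}`. Indexing by `ZMod p`
turns the Frobenius shift `x ↦ x + j` into a translation of the index. -/
noncomputable def frobeniusOrbitSum : R →ₗ[ZMod p] R :=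
  ∑ a : ZMod p, ((FiniteField.frobeniusAlgHom (ZMod p) R) ^ a.val).toLinearMap

variable {p R}

theorem frobeniusAlgHom_pow_apply_of_pow_eq_add_one {x : R} (hx : x ^ p = x + 1) (n : ℕ) :
    (FiniteField.frobeniusAlgHom (ZMod p) R ^ n) x = x + n := by
  induction n with
  | zero => simp
  | succ n ih =>
    rw [pow_succ', AlgHom.mul_apply, ih, map_add, map_natCast,
      FiniteField.frobeniusAlgHom_apply, ZMod.card, hx, Nat.cast_succ]
    ring

theorem frobeniusOrbitSum_aeval_add_algebraMap {x : R} (hx : x ^ p = x + 1) (g : (ZMod p)[X])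
    (c : ZMod p) :
    frobeniusOrbitSum p R (aeval (x + algebraMap (ZMod p) R c) g) =
      ∑ a : ZMod p, aeval (x + algebraMap (ZMod p) R a) g := by
  have hshift : ∀ a : ZMod p, (FiniteField.frobeniusAlgHom (ZMod p) R ^ a.val)
      (x + algebraMap (ZMod p) R c) = x + algebraMap (ZMod p) R (a + c) := by
    intro a
    rw [map_add, AlgHom.commutes, frobeniusAlgHom_pow_apply_of_pow_eq_add_one hx,
      ← map_natCast (algebraMap (ZMod p) R), ZMod.natCast_zmod_val, map_add, add_assoc]
  simp only [frobeniusOrbitSum, LinearMap.sum_apply, AlgHom.toLinearMap_apply,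
    ← aeval_algHom_apply, hshift]
  exact Fintype.sum_equiv (Equiv.addRight c) _ _ fun a => rfl

theorem frobeniusOrbitSum_aeval_sub_aeval_sub {x : R} (hx : x ^ p = x + 1) (g : (ZMod p)[X])
    (c : ZMod p) :
    frobeniusOrbitSum p R (aeval x g - aeval (x - algebraMap (ZMod p) R c) g) = 0 := by
  have h₀ := frobeniusOrbitSum_aeval_add_algebraMap hx g 0
  have h₁ := frobeniusOrbitSum_aeval_add_algebraMap hx g (-c)
  rw [map_zero, add_zero] at h₀
  rw [map_neg, ← sub_eq_add_neg] at h₁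
  rw [map_sub, h₀, h₁, sub_self]

theorem frobeniusOrbitSum_pow_sub_one {x : R} (hx : x ^ p = x + 1) :
    frobeniusOrbitSum p R (x ^ (p - 1)) = -1 := by
  have hp : p.Prime := Fact.out
  have h := frobeniusOrbitSum_aeval_add_algebraMap hx (X ^ (p - 1)) 0
  simp only [map_zero, add_zero, map_pow, aeval_X] at h
  rw [h]
  simpa using sum_smul_add_algebraMap_pow_sub_one (p := p) x (m := 0) (Nat.sub_pos_of_lt hp.one_lt)

end FrobeniusOrbit

section ShiftDifferences

variable (p : ℕ) {R : Type*} [CommRing R]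

def shiftDifferences (x : R) : Set R :=
  {w | ∃ u v i : ℕ, u ≤ p - 1 ∧ v ≤ p - 1 ∧ i ≤ p - 1 ∧
    w = x ^ u * (x + (i : R)) ^ v - x ^ v * (x - (i : R)) ^ u}

variable {p} [Fact p.Prime] [Algebra (ZMod p) R]

theorem add_algebraMap_pow_sub_one_sub_mem_shiftDifferences (x : R) (a : ZMod p) :
    (x + algebraMap (ZMod p) R a) ^ (p - 1) - x ^ (p - 1) ∈ shiftDifferences p x := by
  refine ⟨0, p - 1, a.val, Nat.zero_le _, le_rfl, Nat.le_sub_one_of_lt a.val_lt, ?_⟩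
  rw [← map_natCast (algebraMap (ZMod p) R), ZMod.natCast_zmod_val, pow_zero, pow_zero, one_mul,
    mul_one]

theorem pow_mem_span_shiftDifferences (x : R) {h : ℕ} (hh : h < p - 1) :
    x ^ h ∈ Submodule.span (ZMod p) (shiftDifferences p x) := by
  have hunit : (-1 : ZMod p) ^ (h + 1) ≠ 0 := pow_ne_zero _ (neg_ne_zero.2 one_ne_zero)
  rw [← Submodule.smul_mem_iff _ hunit, neg_one_pow_smul_pow_eq_sum x hh]
  exact Submodule.sum_mem _ fun a _ => Submodule.smul_mem _ _
    (Submodule.subset_span (add_algebraMap_pow_sub_one_sub_mem_shiftDifferences x a))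

theorem shiftDifferences_subset_ker_frobeniusOrbitSum {x : R} (hx : x ^ p = x + 1) :
    shiftDifferences p x ⊆ LinearMap.ker (frobeniusOrbitSum p R) := by
  rintro _ ⟨u, v, i, -, -, -, rfl⟩
  set c : ZMod p := (i : ZMod p)
  have hc : (i : R) = algebraMap (ZMod p) R c := (map_natCast _ i).symm
  set g : (ZMod p)[X] := X ^ u * (X + C c) ^ v
  have hg : x ^ u * (x + (i : R)) ^ v - x ^ v * (x - (i : R)) ^ u =
      aeval x g - aeval (x - algebraMap (ZMod p) R c) g := by
    simp only [g, hc, map_mul, map_pow, map_add, aeval_X, aeval_C, sub_add_cancel]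
    ring
  rw [SetLike.mem_coe, LinearMap.mem_ker, hg]
  exact frobeniusOrbitSum_aeval_sub_aeval_sub hx _ c

theorem pow_sub_one_notMem_span_shiftDifferences [Nontrivial R] {x : R} (hx : x ^ p = x + 1) :
    x ^ (p - 1) ∉ Submodule.span (ZMod p) (shiftDifferences p x) := fun hmem => by
  have hker := Submodule.span_le.2 (shiftDifferences_subset_ker_frobeniusOrbitSum hx) hmem
  rw [LinearMap.mem_ker, frobeniusOrbitSum_pow_sub_one hx] at hker
  exact neg_ne_zero.2 one_ne_zero hker

end ShiftDifferences

section Dimension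

variable {p : ℕ} [Fact p.Prime] {K : Type*} [Field K] [Algebra (ZMod p) K]

theorem natDegree_minpoly_eq_of_finrank_eq (hdim : finrank (ZMod p) K = p) {x : K}
    (hx : x ^ p ≠ x) : (minpoly (ZMod p) x).natDegree = p := by
  have hp : p.Prime := Fact.out
  have : FiniteDimensional (ZMod p) K := .of_finrank_pos (by rw [hdim]; exact hp.pos)
  have hdvd := minpoly.degree_dvd (IsIntegral.of_finite (ZMod p) x)
  rw [hdim] at hdvd
  refine (hp.eq_one_or_self_of_dvd _ hdvd).resolve_left fun hone => hx ?_
  obtain ⟨c, rfl⟩ := minpoly.natDegree_eq_one_iff.1 hone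
  rw [← map_pow, ZMod.pow_card]

theorem finrank_span_shiftDifferences {x : K} (hx : x ^ p = x + 1)
    (hdim : finrank (ZMod p) K = p) :
    finrank (ZMod p) (Submodule.span (ZMod p) (shiftDifferences p x)) = p - 1 := by
  have hp : p.Prime := Fact.out
  have : FiniteDimensional (ZMod p) K := .of_finrank_pos (by rw [hdim]; exact hp.pos)
  set V := Submodule.span (ZMod p) (shiftDifferences p x)
  have hupper := Submodule.finrank_lt fun htop : V = ⊤ =>
    pow_sub_one_notMem_span_shiftDifferences hx (Submodule.eq_top_iff'.1 htop _)
  rw [hdim] at hupper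
  have hdeg := natDegree_minpoly_eq_of_finrank_eq hdim (x := x) (by simp [hx])
  have hindep : LinearIndependent (ZMod p) fun i : Fin (p - 1) =>
      (⟨x ^ (i : ℕ), pow_mem_span_shiftDifferences x i.isLt⟩ : V) := by
    refine LinearIndependent.of_comp V.subtype ?_
    exact (hdeg ▸ linearIndependent_pow (K := ZMod p) x).comp _
      (Fin.castLE_injective (Nat.sub_le p 1))
  have hlower := hindep.fintype_card_le_finrank
  rw [Fintype.card_fin] at hlower
  omega

end Dimension

/-- Let K = F_p(x) with x^p = x + 1 (so K = F_{p^p}), and let V be the F_p-span of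
the elements x^u (x+i)^v - x^v (x-i)^u, 0 ≤ u,v,i ≤ p-1. Then x^h ∈ V for all
h ≤ p-2, while x^{p-1} ∉ V; so V has codimension 1 in K. -/
theorem artinSchreier_commutator_span (p : ℕ) [Fact p.Prime] (K : Type*) [Field K]
    [Algebra (ZMod p) K] (x : K) (hx : x ^ p = x + 1)
    (hdim : Module.finrank (ZMod p) K = p) :
    (∀ h ≤ p - 2, x ^ h ∈ Submodule.span (ZMod p) {w : K | ∃ u v i : ℕ,
      u ≤ p - 1 ∧ v ≤ p - 1 ∧ i ≤ p - 1 ∧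
      w = x ^ u * (x + (i : K)) ^ v - x ^ v * (x - (i : K)) ^ u}) ∧
    x ^ (p - 1) ∉ Submodule.span (ZMod p) {w : K | ∃ u v i : ℕ,
      u ≤ p - 1 ∧ v ≤ p - 1 ∧ i ≤ p - 1 ∧
      w = x ^ u * (x + (i : K)) ^ v - x ^ v * (x - (i : K)) ^ u} ∧
    Module.finrank (ZMod p) (Submodule.span (ZMod p) {w : K | ∃ u v i : ℕ,
      u ≤ p - 1 ∧ v ≤ p - 1 ∧ i ≤ p - 1 ∧
      w = x ^ u * (x + (i : K)) ^ v - x ^ v * (x - (i : K)) ^ u}) = p - 1 := by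
  have hp : p.Prime := Fact.out
  refine ⟨fun h hh => ?_, pow_sub_one_notMem_span_shiftDifferences hx,
    finrank_span_shiftDifferences hx hdim⟩
  exact pow_mem_span_shiftDifferences x (by have := hp.two_le; omega)
end

section
/- The cyclic algebra A = (F_{p^p}/F_p, σ, 1), the skew group algebra of K = F_{p^p} with the cyclic group C_p acting via the Frobenius automorphism σ, with its natural C_p-grading A = K ⊕ Ky ⊕ ... ⊕ Ky^{p-1} (where ya = σ(a)y and y^p = 1), is graded symmetric over k = F_p. -/
open Module

/-! Take `λ(Σ aᵢ yⁱ) = Tr_{K/𝔽_p}(a₀)`. For `i + j ≡ 0` the products `(u yⁱ)(v yʲ)` and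
`(v yʲ)(u yⁱ)` are `u σⁱ(v)` and `v σʲ(u)`, which have the same trace because the trace is
`σ`-invariant and `σᵖ = id`; products of other degrees lie in `ker λ`. A nonzero `u yⁱ` is moved
into degree `0` by left multiplication with `w y⁻ⁱ`, and the trace is surjective, so no nonzero
graded left ideal lies in `ker λ`. -/

theorem LinearMap.map_mul_comm_of_homogeneous {ι k A N : Type*} [CommSemiring k] [Semiring A]
    [Algebra k A] [AddCommMonoid N] [Module k N] {𝒜 : ι → Submodule k A}
    (h𝒜 : ⨆ i, 𝒜 i = ⊤) (lam : A →ₗ[k] N)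
    (h : ∀ i j, ∀ a ∈ 𝒜 i, ∀ b ∈ 𝒜 j, lam (a * b) = lam (b * a)) (a b : A) :
    lam (a * b) = lam (b * a) := by
  have mem_iSup (x : A) : x ∈ ⨆ i, 𝒜 i := h𝒜 ▸ Submodule.mem_top
  have homogeneous_left : ∀ i, ∀ a ∈ 𝒜 i, ∀ b, lam (a * b) = lam (b * a) := fun i a ha b =>
    Submodule.iSup_induction 𝒜 (motive := fun b => lam (a * b) = lam (b * a)) (mem_iSup b)
      (fun j b hb => h i j a ha b hb) (by simp)
      (fun b c hb hc => by simp only [mul_add, add_mul, map_add, hb, hc])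
  exact Submodule.iSup_induction 𝒜 (motive := fun a => lam (a * b) = lam (b * a)) (mem_iSup a)
    (fun i a ha => homogeneous_left i a ha b) (by simp)
    (fun a c ha hc => by simp only [mul_add, add_mul, map_add, ha, hc])

theorem IsGradedLeftIdeal.eq_bot {ι k A N : Type*} [Field k] [Ring A] [Algebra k A]
    [AddCommMonoid N] [Module k N] {𝒜 : ι → Submodule k A} {I : Submodule A A}
    (hI : IsGradedLeftIdeal 𝒜 I) (lam : A →ₗ[k] N)
    (hnd : ∀ i, ∀ a ∈ 𝒜 i, a ≠ 0 → ∃ c, lam (c * a) ≠ 0) (hker : ∀ x ∈ I, lam x = 0) :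
    I = ⊥ := by
  rw [hI, Submodule.span_eq_bot]
  rintro x ⟨hxI, hx⟩
  obtain ⟨i, hi⟩ := Set.mem_iUnion.1 hx
  by_contra hne
  obtain ⟨c, hc⟩ := hnd i x hi hne
  exact hc (hker _ (I.smul_mem c hxI))

theorem isGradedSymmetric_of_homogeneous {k A G : Type*} [Field k] [Ring A] [Algebra k A]
    [Group G] {𝒜 : G → Submodule k A} (h𝒜 : ⨆ g, 𝒜 g = ⊤) (lam : A →ₗ[k] k)
    (hsymm : ∀ g h, ∀ a ∈ 𝒜 g, ∀ b ∈ 𝒜 h, lam (a * b) = lam (b * a))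
    (hzero : ∀ g ≠ 1, ∀ a ∈ 𝒜 g, lam a = 0)
    (hnd : ∀ g, ∀ a ∈ 𝒜 g, a ≠ 0 → ∃ c, lam (c * a) ≠ 0) :
    IsGradedSymmetric 𝒜 :=
  ⟨lam, lam.map_mul_comm_of_homogeneous h𝒜 hsymm, hzero, fun _ hI hker => hI.eq_bot lam hnd hker⟩

theorem DirectSum.IsInternal.exists_linearMap_comp_eq {ι k M V N : Type*} [DecidableEq ι]
    [Semiring k] [AddCommMonoid M] [Module k M] [AddCommMonoid V] [Module k V]
    [AddCommMonoid N] [Module k N] {𝒜 : ι → Submodule k M} (h𝒜 : IsInternal 𝒜) {i₀ : ι}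
    (f : V →ₗ[k] M) (hf : Function.Injective f) (hrange : LinearMap.range f = 𝒜 i₀)
    (φ : V →ₗ[k] N) :
    ∃ lam : M →ₗ[k] N, lam ∘ₗ f = φ ∧ ∀ i ≠ i₀, ∀ a ∈ 𝒜 i, lam a = 0 := by
  let e := LinearEquiv.ofBijective (coeLinearMap 𝒜) h𝒜
  let coord : 𝒜 i₀ ≃ₗ[k] V :=
    (LinearEquiv.ofEq _ _ hrange).symm.trans (LinearEquiv.ofInjective f hf).symm
  refine ⟨φ ∘ₗ coord.toLinearMap ∘ₗ component k ι (fun i => 𝒜 i) i₀ ∘ₗ e.symm.toLinearMap,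
    ?_, fun i hi a ha => ?_⟩
  · ext v
    have hv : f v ∈ 𝒜 i₀ := hrange ▸ LinearMap.mem_range_self f v
    show φ (coord (e.symm (f v) i₀)) = φ v
    rw [h𝒜.ofBijective_coeLinearMap_of_mem hv, LinearEquiv.trans_apply]
    exact congrArg φ ((LinearEquiv.ofInjective f hf).symm_apply_eq.2 rfl)
  · show φ (coord (e.symm a i₀)) = 0
    rw [h𝒜.ofBijective_coeLinearMap_of_mem_ne hi ha, map_zero, map_zero]

section SkewCommutation

variable {A : Type*} [Monoid A] {p : ℕ} {y : A}

theorem pow_mul_apply_eq_apply_pow_pow_mul {K : Type*} [Monoid K] (f : K → A)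
    (hy : ∀ a, y * f a = f (a ^ p) * y) (n : ℕ) (a : K) : y ^ n * f a = f (a ^ p ^ n) * y ^ n := by
  induction n generalizing a with
  | zero => simp
  | succ n ih => rw [pow_succ, mul_assoc, hy, ← mul_assoc, ih, ← pow_mul, ← pow_succ', mul_assoc]

theorem pow_zmod_val_add [NeZero p] (hyp : y ^ p = 1) (i j : ZMod p) :
    y ^ (i + j).val = y ^ i.val * y ^ j.val := by
  rw [ZMod.val_add, ← pow_eq_pow_mod _ hyp, pow_add]

theorem apply_mul_pow_val_mul_apply_mul_pow_val [NeZero p] {K F : Type*} [Monoid K]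
    [FunLike F K A] [MonoidHomClass F K A] (f : F) (hy : ∀ a, y * f a = f (a ^ p) * y)
    (hyp : y ^ p = 1) (u v : K) (i j : ZMod p) :
    (f u * y ^ i.val) * (f v * y ^ j.val) = f (u * v ^ p ^ i.val) * y ^ (i + j).val := by
  rw [pow_zmod_val_add hyp, mul_assoc, ← mul_assoc (y ^ i.val),
    pow_mul_apply_eq_apply_pow_pow_mul f hy, map_mul]
  simp only [mul_assoc]

end SkewCommutation

section FiniteField

variable {p : ℕ} [Fact p.Prime] {K : Type*} [Field K] [Finite K] [Algebra (ZMod p) K]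

theorem Algebra.trace_pow_pow_eq (n : ℕ) (x : K) :
    Algebra.trace (ZMod p) K (x ^ p ^ n) = Algebra.trace (ZMod p) K x := by
  have := Algebra.trace_eq_of_algEquiv (FiniteField.frobeniusAlgEquivOfAlgebraic (ZMod p) K ^ n) x
  rwa [AlgEquiv.coe_pow, FiniteField.coe_frobeniusAlgEquivOfAlgebraic_iterate, ZMod.card] at this

theorem pow_pow_eq_self_of_finrank_dvd {d n : ℕ} (hK : finrank (ZMod p) K = d) (h : d ∣ n)
    (x : K) : x ^ p ^ n = x := by
  have := Fintype.ofFinite K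
  obtain ⟨m, rfl⟩ := h
  rw [pow_mul, ← ZMod.card p, ← hK, ← Module.card_eq_pow_finrank, FiniteField.pow_card_pow]

theorem Algebra.trace_mul_pow_pow_comm {d m n : ℕ} (hK : finrank (ZMod p) K = d)
    (h : d ∣ m + n) (u v : K) :
    Algebra.trace (ZMod p) K (u * v ^ p ^ m) = Algebra.trace (ZMod p) K (v * u ^ p ^ n) := by
  rw [← Algebra.trace_pow_pow_eq n, mul_pow, ← pow_mul, ← pow_add,
    pow_pow_eq_self_of_finrank_dvd hK h, mul_comm]

end FiniteField

section CyclicAlgebra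

variable {p : ℕ} [Fact p.Prime] {K A F : Type*} [Field K] [Finite K] [Algebra (ZMod p) K]
  [Semiring A] [Module (ZMod p) A] [FunLike F K A] [MonoidHomClass F K A] (f : F) {y : A}
  {lam : A →ₗ[ZMod p] ZMod p}

theorem map_mul_pow_mul_comm (hK : finrank (ZMod p) K = p) (hy : ∀ a, y * f a = f (a ^ p) * y)
    (hyp : y ^ p = 1) (hlam : ∀ w, lam (f w) = Algebra.trace (ZMod p) K w)
    (hzero : ∀ i : ZMod p, i ≠ 0 → ∀ u, lam (f u * y ^ i.val) = 0) (u v : K) (i j : ZMod p) :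
    lam ((f u * y ^ i.val) * (f v * y ^ j.val)) = lam ((f v * y ^ j.val) * (f u * y ^ i.val)) := by
  rw [apply_mul_pow_val_mul_apply_mul_pow_val f hy hyp,
    apply_mul_pow_val_mul_apply_mul_pow_val f hy hyp, add_comm j i]
  by_cases hij : i + j = 0
  · have hdvd : p ∣ i.val + j.val := (ZMod.natCast_eq_zero_iff _ p).1 (by simpa using hij)
    rw [hij, ZMod.val_zero, pow_zero, mul_one, mul_one, hlam, hlam]
    exact Algebra.trace_mul_pow_pow_comm hK hdvd u v
  · rw [hzero _ hij, hzero _ hij]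

theorem exists_map_mul_mul_pow_ne_zero (hy : ∀ a, y * f a = f (a ^ p) * y) (hyp : y ^ p = 1)
    (hlam : ∀ w, lam (f w) = Algebra.trace (ZMod p) K w) {u : K} (hu : u ≠ 0) (i : ZMod p) :
    ∃ c, lam (c * (f u * y ^ i.val)) ≠ 0 := by
  obtain ⟨t, ht⟩ := Algebra.trace_surjective (ZMod p) K 1
  refine ⟨f (t / u ^ p ^ (-i).val) * y ^ (-i).val, ?_⟩
  rw [apply_mul_pow_val_mul_apply_mul_pow_val f hy hyp, neg_add_cancel, ZMod.val_zero, pow_zero,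
    mul_one, div_mul_cancel₀ _ (pow_ne_zero _ hu), hlam, ht]
  exact one_ne_zero

end CyclicAlgebra

/-- The cyclic algebra (F_{p^p}/F_p, Frobenius, 1), i.e. the skew group algebra
A = K ⊕ Ky ⊕ ... ⊕ Ky^{p-1} with y a = a^p y and y^p = 1, with its natural grading
by the cyclic group of order p, is graded symmetric. -/
theorem cyclicAlgebra_isGradedSymmetric (p : ℕ) [Fact p.Prime] (K A : Type*) [Field K]
    [Algebra (ZMod p) K] [Ring A] [Algebra (ZMod p) A]
    (hK : Module.finrank (ZMod p) K = p)
    (iota : K →ₐ[ZMod p] A) (hinj : Function.Injective iota) (y : A)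
    (hy : ∀ a : K, y * iota a = iota (a ^ p) * y) (hyp : y ^ p = 1)
    (𝒜 : Multiplicative (ZMod p) → Submodule (ZMod p) A)
    (h𝒜 : ∀ i : ZMod p, (𝒜 (Multiplicative.ofAdd i) : Set A) =
      {z : A | ∃ a : K, z = iota a * y ^ i.val})
    (hinternal : DirectSum.IsInternal 𝒜) :
    IsGradedSymmetric 𝒜 := by
  have : FiniteDimensional (ZMod p) K := .of_finrank_pos (hK.symm ▸ (Fact.out : p.Prime).pos)
  have : Finite K := Module.finite_of_finite (ZMod p)
  have homogeneous : ∀ g, ∀ a ∈ 𝒜 g, ∃ u, a = iota u * y ^ g.toAdd.val :=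
    fun g a ha => (h𝒜 g.toAdd).subset ha
  have mem_homogeneous (i : ZMod p) (u : K) : iota u * y ^ i.val ∈ 𝒜 (.ofAdd i) :=
    (h𝒜 i).superset ⟨u, rfl⟩
  have hrange : LinearMap.range iota.toLinearMap = 𝒜 1 := by
    ext z
    simpa [eq_comm] using (Set.ext_iff.1 (h𝒜 0) z).symm
  obtain ⟨lam, hlam, hzero⟩ := hinternal.exists_linearMap_comp_eq iota.toLinearMap hinj hrange
    (Algebra.trace (ZMod p) K)
  have hlam (w : K) : lam (iota w) = Algebra.trace (ZMod p) K w := LinearMap.congr_fun hlam w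
  refine isGradedSymmetric_of_homogeneous hinternal.submodule_iSup_eq_top lam ?_ hzero ?_
  · rintro g h _ ha _ hb
    obtain ⟨u, rfl⟩ := homogeneous g _ ha
    obtain ⟨v, rfl⟩ := homogeneous h _ hb
    exact map_mul_pow_mul_comm iota hK hy hyp hlam
      (fun i hi u => hzero _ (by simpa using hi) _ (mem_homogeneous i u)) u v _ _
  · rintro g _ ha hne
    obtain ⟨u, rfl⟩ := homogeneous g _ ha
    exact exists_map_mul_mul_pow_ne_zero iota hy hyp hlam (by rintro rfl; simp at hne) _
end

section
/- Let Δ be a G-graded division algebra over k which is graded symmetric, and let σ_1,…,σ_n ∈ G. Then the graded matrix algebra M_n(Δ)(σ_1,…,σ_n) is graded symmetric; explicitly, if λ : Δ → k witnesses graded symmetry of Δ, then Λ(x) = λ(tr(x)) witnesses graded symmetry of M_n(Δ)(σ_1,…,σ_n). -/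
open Module

/-
Λ = lam ∘ tr is symmetric because lam is, and it kills the components of degree g ≠ e because
the diagonal entries of such a matrix have the conjugate degrees σᵢ g σᵢ⁻¹ ≠ e. For the kernel
condition, fix a column q. Since d * X j q = tr (E_qj(d) X), the q-th column entries of the
homogeneous matrices X of a graded left ideal I ⊆ ker Λ span a graded left ideal of Δ inside
ker lam, which is therefore zero; so every homogeneous element of I vanishes, and I = 0.
-/

theorem map_trace_mul_comm {R M F m n : Type*} [Fintype m] [Fintype n]
    [NonUnitalNonAssocSemiring R] [AddCommMonoid M] [FunLike F R M] [AddMonoidHomClass F R M]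
    (f : F) (hf : ∀ a b : R, f (a * b) = f (b * a)) (X : Matrix m n R) (Y : Matrix n m R) :
    f (Matrix.trace (X * Y)) = f (Matrix.trace (Y * X)) := by
  simp only [Matrix.trace, Matrix.diag, Matrix.mul_apply, map_sum]
  rw [Finset.sum_comm]
  exact Finset.sum_congr rfl fun i _ => Finset.sum_congr rfl fun j _ => hf _ _

theorem map_trace_eq_zero_of_diag_mem {k R G ι : Type*} [Fintype ι] [CommSemiring k]
    [Semiring R] [Module k R] [Group G] (𝒜 : G → Submodule k R) (lam : R →ₗ[k] k)
    (hvanish : ∀ g : G, g ≠ 1 → ∀ a ∈ 𝒜 g, lam a = 0) (σ : ι → G) {g : G} (hg : g ≠ 1)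
    {M : Matrix ι ι R} (hM : ∀ i, M i i ∈ 𝒜 (σ i * g * (σ i)⁻¹)) :
    lam (Matrix.trace M) = 0 := by
  simp only [Matrix.trace, Matrix.diag, map_sum]
  exact Finset.sum_eq_zero fun i _ => hvanish _ (conj_eq_one_iff.not.mpr hg) _ (hM i)

section LeftIdeal

variable {k A G : Type*} [Field k] [Ring A] [Algebra k A]

theorem isGradedLeftIdeal_span (𝒜 : G → Submodule k A) {S : Set A}
    (hS : S ⊆ ⋃ g, (𝒜 g : Set A)) : IsGradedLeftIdeal 𝒜 (Submodule.span A S) :=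
  le_antisymm (Submodule.span_mono fun _ hs => ⟨Submodule.subset_span hs, hS hs⟩)
    (Submodule.span_le.mpr Set.inter_subset_left)

theorem IsGradedLeftIdeal.eq_bot_of_forall_homogeneous {𝒜 : G → Submodule k A}
    {I : Submodule A A} (hI : IsGradedLeftIdeal 𝒜 I)
    (h : ∀ g, ∀ x ∈ I, x ∈ 𝒜 g → x = 0) : I = ⊥ := by
  rw [hI, Submodule.span_eq_bot]
  rintro x ⟨hxI, hx⟩
  obtain ⟨g, hxg⟩ := Set.mem_iUnion.mp hx
  exact h g x hxI hxg

end LeftIdeal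

theorem map_eq_zero_of_mem_span {k R : Type*} [CommSemiring k] [Semiring R] [Module k R]
    [IsScalarTower k R R] (lam : R →ₗ[k] k) {S : Set R}
    (hS : ∀ s ∈ S, ∀ d : R, lam (d * s) = 0) {x : R} (hx : x ∈ Submodule.span R S) :
    lam x = 0 := by
  -- the largest left ideal contained in `ker lam`
  let J : Submodule R R :=
    { carrier := {x | ∀ d : R, lam (d * x) = 0}
      add_mem' := fun ha hb d => by simp only [mul_add, map_add, ha d, hb d, add_zero]
      zero_mem' := fun d => by simp
      smul_mem' := fun c x hx d => by simpa only [smul_eq_mul, mul_assoc] using hx (d * c) }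
  simpa using Submodule.span_le.mpr (show S ⊆ J from hS) hx 1

theorem eq_bot_of_isGradedLeftIdeal_of_map_trace_eq_zero {k Δ G ι : Type*} [Fintype ι]
    [DecidableEq ι] [Field k] [Ring Δ] [Algebra k Δ] (𝒜 : G → Submodule k Δ)
    (lam : Δ →ₗ[k] k)
    (hker : ∀ I : Submodule Δ Δ, IsGradedLeftIdeal 𝒜 I → (∀ x ∈ I, lam x = 0) → I = ⊥)
    {H : Type*} (ℳ : H → Submodule k (Matrix ι ι Δ))
    (hℳ : ∀ g, ∀ M ∈ ℳ g, ∀ i j, M i j ∈ ⋃ h, (𝒜 h : Set Δ))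
    {I : Submodule (Matrix ι ι Δ) (Matrix ι ι Δ)} (hI : IsGradedLeftIdeal ℳ I)
    (hIlam : ∀ X ∈ I, lam (Matrix.trace X) = 0) : I = ⊥ := by
  refine hI.eq_bot_of_forall_homogeneous fun g X hXI hXg => Matrix.ext fun i q => ?_
  let column : Set Δ := {d | ∃ Y ∈ I, (∃ h, Y ∈ ℳ h) ∧ ∃ j, d = Y j q}
  have hcolumn_graded : IsGradedLeftIdeal 𝒜 (Submodule.span Δ column) :=
    isGradedLeftIdeal_span 𝒜 fun _ ⟨Y, _, ⟨h, hYh⟩, j, hd⟩ => hd ▸ hℳ h Y hYh j q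
  have hcolumn_ker : ∀ s ∈ column, ∀ d, lam (d * s) = 0 := by
    rintro _ ⟨Y, hYI, -, j, rfl⟩ d
    simpa [Matrix.trace_single_mul] using hIlam _ (I.smul_mem (Matrix.single q j d) hYI)
  have hcolumn_bot := hker _ hcolumn_graded fun _ => map_eq_zero_of_mem_span lam hcolumn_ker
  have hXiq : X i q ∈ Submodule.span Δ column :=
    Submodule.subset_span ⟨X, hXI, ⟨g, hXg⟩, i, rfl⟩
  simpa [hcolumn_bot] using hXiq

theorem gradedMatrix_isGradedSymmetric_general {k Δ G : Type*} [Field k] [Ring Δ] [Algebra k Δ]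
    [Group G]
    (𝒜 : G → Submodule k Δ)
    (n : ℕ) (σ : Fin n → G)
    (lam : Δ →ₗ[k] k)
    (hsymm : ∀ a b : Δ, lam (a * b) = lam (b * a))
    (hvanish : ∀ g : G, g ≠ 1 → ∀ a ∈ 𝒜 g, lam a = 0)
    (hker : ∀ I : Submodule Δ Δ, IsGradedLeftIdeal 𝒜 I → (∀ x ∈ I, lam x = 0) → I = ⊥)
    (ℳ : G → Submodule k (Matrix (Fin n) (Fin n) Δ))
    (hℳ : ∀ (g : G) (M : Matrix (Fin n) (Fin n) Δ),
      M ∈ ℳ g ↔ ∀ i j : Fin n, M i j ∈ 𝒜 (σ i * g * (σ j)⁻¹)) :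
    (∀ X Y : Matrix (Fin n) (Fin n) Δ,
      lam (Matrix.trace (X * Y)) = lam (Matrix.trace (Y * X))) ∧
    (∀ g : G, g ≠ 1 → ∀ M ∈ ℳ g, lam (Matrix.trace M) = 0) ∧
    (∀ I : Submodule (Matrix (Fin n) (Fin n) Δ) (Matrix (Fin n) (Fin n) Δ),
      IsGradedLeftIdeal ℳ I → (∀ X ∈ I, lam (Matrix.trace X) = 0) → I = ⊥) ∧
    IsGradedSymmetric ℳ := by
  have symm : ∀ X Y : Matrix (Fin n) (Fin n) Δ,
      lam (Matrix.trace (X * Y)) = lam (Matrix.trace (Y * X)) :=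
    map_trace_mul_comm lam hsymm
  have vanish : ∀ g : G, g ≠ 1 → ∀ M ∈ ℳ g, lam (Matrix.trace M) = 0 :=
    fun g hg M hM =>
      map_trace_eq_zero_of_diag_mem 𝒜 lam hvanish σ hg fun i => (hℳ g M).mp hM i i
  have ker : ∀ I : Submodule (Matrix (Fin n) (Fin n) Δ) (Matrix (Fin n) (Fin n) Δ),
      IsGradedLeftIdeal ℳ I → (∀ X ∈ I, lam (Matrix.trace X) = 0) → I = ⊥ := fun I hI =>
    eq_bot_of_isGradedLeftIdeal_of_map_trace_eq_zero 𝒜 lam hker ℳ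
      (fun g M hM i j => Set.mem_iUnion.mpr ⟨_, (hℳ g M).mp hM i j⟩) hI
  exact ⟨symm, vanish, ker, lam.comp (Matrix.traceLinearMap (Fin n) k Δ), symm, vanish, ker⟩

/-- If Δ is a graded symmetric graded division algebra, witnessed by lam, then the
graded matrix algebra M_n(Δ)(σ₁,…,σₙ) is graded symmetric, witnessed by lam ∘ tr. -/
theorem gradedMatrix_isGradedSymmetric {k Δ G : Type*} [Field k] [Ring Δ] [Algebra k Δ]
    [Group G] [DecidableEq G]
    (𝒜 : G → Submodule k Δ) (hA : IsGradedDivisionAlgebra 𝒜)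
    (n : ℕ) (hn : 0 < n) (σ : Fin n → G)
    (lam : Δ →ₗ[k] k)
    (hsymm : ∀ a b : Δ, lam (a * b) = lam (b * a))
    (hvanish : ∀ g : G, g ≠ 1 → ∀ a ∈ 𝒜 g, lam a = 0)
    (hker : ∀ I : Submodule Δ Δ, IsGradedLeftIdeal 𝒜 I → (∀ x ∈ I, lam x = 0) → I = ⊥)
    (ℳ : G → Submodule k (Matrix (Fin n) (Fin n) Δ))
    (hℳ : ∀ (g : G) (M : Matrix (Fin n) (Fin n) Δ),
      M ∈ ℳ g ↔ ∀ i j : Fin n, M i j ∈ 𝒜 (σ i * g * (σ j)⁻¹)) :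
    (∀ X Y : Matrix (Fin n) (Fin n) Δ,
      lam (Matrix.trace (X * Y)) = lam (Matrix.trace (Y * X))) ∧
    (∀ g : G, g ≠ 1 → ∀ M ∈ ℳ g, lam (Matrix.trace M) = 0) ∧
    (∀ I : Submodule (Matrix (Fin n) (Fin n) Δ) (Matrix (Fin n) (Fin n) Δ),
      IsGradedLeftIdeal ℳ I → (∀ X ∈ I, lam (Matrix.trace X) = 0) → I = ⊥) ∧
    IsGradedSymmetric ℳ :=
  gradedMatrix_isGradedSymmetric_general 𝒜 n σ lam hsymm hvanish hker ℳ hℳ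
end

section
/- Let A be a finite dimensional G-graded simple algebra over k such that char k does not divide dim_k A. Then A is graded symmetric. In particular, every finite dimensional graded simple algebra over a field of characteristic zero is graded symmetric. -/
open Module

/-- A finite dimensional `G`-graded simple algebra with `char k ∤ dim_k A` is graded
symmetric (in particular, any finite dimensional graded simple algebra in
characteristic zero is graded symmetric). -/
theorem gradedSimple_isGradedSymmetric {k A G : Type*} [Field k] [Ring A] [Algebra k A]
    [Group G] [DecidableEq G] [Nontrivial A] [FiniteDimensional k A]
    (𝒜 : G → Submodule k A)
    (hmul : ∀ {g h : G} {a b : A}, a ∈ 𝒜 g → b ∈ 𝒜 h → a * b ∈ 𝒜 (g * h))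
    (hone : (1 : A) ∈ 𝒜 1)
    (hinternal : DirectSum.IsInternal 𝒜)
    (hsimple : ∀ I : Ideal A, IsGradedLeftIdeal 𝒜 I → (∀ x ∈ I, ∀ a : A, x * a ∈ I) →
      I = ⊥ ∨ I = ⊤)
    (hchar : ¬ ringChar k ∣ Module.finrank k A) :
    IsGradedSymmetric 𝒜 := by
  classical
  refine ⟨(LinearMap.trace k A).comp (LinearMap.mul k A), ?_, ?_, ?_⟩
  · intro a b
    have hml : ∀ x : A, LinearMap.mul k A x = LinearMap.mulLeft k x :=
      fun x => LinearMap.ext fun y => by simp [LinearMap.mul_apply']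
    simp only [LinearMap.comp_apply, hml]
    rw [LinearMap.mulLeft_mul k A a b, LinearMap.mulLeft_mul k A b a]
    exact LinearMap.trace_mul_comm k _ _
  · -- vanishing on homogeneous components of degree ≠ 1
    intro g hg a ha
    simp only [LinearMap.comp_apply, LinearMap.mul_apply']
    let b : ∀ h : G, Basis (Basis.ofVectorSpaceIndex k (𝒜 h)) k (𝒜 h) :=
      fun h => Basis.ofVectorSpace k (𝒜 h)
    let B := hinternal.collectedBasis b
    haveI : Fintype (Σ h : G, Basis.ofVectorSpaceIndex k (𝒜 h)) :=
      FiniteDimensional.fintypeBasisIndex B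
    rw [LinearMap.trace_eq_matrix_trace k B, Matrix.trace]
    apply Finset.sum_eq_zero
    intro i _
    have hBi : (B i : A) ∈ 𝒜 i.1 := hinternal.collectedBasis_mem b i
    have hmem : a * B i ∈ 𝒜 (g * i.1) := hmul ha hBi
    have hne : g * i.1 ≠ i.1 := fun h =>
      hg (mul_right_cancel (h.trans (one_mul i.1).symm))
    rw [Matrix.diag_apply, LinearMap.toMatrix_apply]
    obtain ⟨i1, i2⟩ := i
    exact hinternal.collectedBasis_repr_of_mem_ne b hne hmem
  · -- no nonzero graded left ideal in the kernel
    intro I hI hvanish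
    by_contra hne
    -- the two-sided ideal generated by I
    set S : Set A := {z | ∃ x ∈ I, ∃ a : A, z = x * a} with hS
    set J : Ideal A := Submodule.span A S with hJ
    have hIJ : ∀ x ∈ I, x ∈ J := fun x hx =>
      Submodule.subset_span ⟨x, hx, 1, (mul_one x).symm⟩
    -- J is closed under right multiplication
    have hJright : ∀ z ∈ J, ∀ a : A, z * a ∈ J := by
      intro z hz a
      induction hz using Submodule.span_induction with
      | mem z hzS =>
        obtain ⟨x, hx, c, rfl⟩ := hzS
        exact Submodule.subset_span ⟨x, hx, c * a, by rw [mul_assoc]⟩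
      | zero => simpa using J.zero_mem
      | add u v _ _ hu hv => rw [add_mul]; exact J.add_mem hu hv
      | smul c u _ hu =>
        have : (c • u) * a = c • (u * a) := by
          simp only [smul_eq_mul, mul_assoc]
        rw [this]; exact J.smul_mem c hu
    -- J is a graded left ideal
    have hhomtop : (⊤ : Submodule k A) = Submodule.span k (⋃ g, (𝒜 g : Set A)) := by
      rw [← hinternal.submodule_iSup_eq_top, Submodule.iSup_eq_span]
    have hJgraded : IsGradedLeftIdeal 𝒜 J := by
      refine le_antisymm ?_ (Submodule.span_le.2 (Set.inter_subset_left))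
      rw [hJ]
      refine Submodule.span_le.2 ?_
      rintro z ⟨x, hx, a, rfl⟩
      -- first: x homogeneous in I implies x * a in the span
      have key : ∀ y ∈ (I : Set A) ∩ ⋃ g, (𝒜 g : Set A), ∀ c : A,
          y * c ∈ Submodule.span A ((J : Set A) ∩ ⋃ g, (𝒜 g : Set A)) := by
        intro y hy c
        obtain ⟨hyI, hyhom⟩ := hy
        obtain ⟨_, ⟨gy, rfl⟩, hygy⟩ := hyhom
        -- the set of c with this property is a k-submodule containing every 𝒜 g
        have hc : c ∈ (⊤ : Submodule k A) := trivial
        rw [hhomtop] at hc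
        induction hc using Submodule.span_induction with
        | mem c hchom =>
          obtain ⟨_, ⟨gc, rfl⟩, hcgc⟩ := hchom
          refine Submodule.subset_span ⟨?_, ?_⟩
          · exact Submodule.subset_span ⟨y, hyI, c, rfl⟩
          · exact Set.mem_iUnion.2 ⟨gy * gc, hmul hygy hcgc⟩
        | zero => simpa using Submodule.zero_mem _
        | add u v _ _ hu hv => rw [mul_add]; exact Submodule.add_mem _ hu hv
        | smul s u _ hu =>
          rw [mul_smul_comm]
          exact Submodule.smul_of_tower_mem _ s hu
      -- now: any x ∈ I times a is in the span, by induction over I's grading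
      have hxspan : x ∈ Submodule.span A ((I : Set A) ∩ ⋃ g, (𝒜 g : Set A)) := hI ▸ hx
      clear hx
      induction hxspan using Submodule.span_induction with
      | mem y hy => exact key y hy a
      | zero => simpa using Submodule.zero_mem _
      | add u v _ _ hu hv => rw [add_mul]; exact Submodule.add_mem _ hu hv
      | smul s u _ hu =>
        have : (s • u) * a = s • (u * a) := by
          simp only [smul_eq_mul, mul_assoc]
        rw [this]; exact Submodule.smul_mem _ s hu
    -- J is nonzero, hence J = ⊤ by graded simplicity
    have hJne : J ≠ ⊥ := by
      intro hbot
      apply hne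
      rw [eq_bot_iff]
      intro x hx
      have := hIJ x hx
      rw [hbot] at this
      simpa using this
    have hJtop : J = ⊤ := (hsimple J hJgraded hJright).resolve_left hJne
    -- lam vanishes on J (using symmetry and that I is a left ideal)
    have hlamJ : ∀ z ∈ J, ∀ c : A,
        (LinearMap.trace k A) (LinearMap.mul k A (c * z)) = 0 := by
      intro z hz
      induction hz using Submodule.span_induction with
      | mem z hzS =>
        intro c
        obtain ⟨x, hx, a, rfl⟩ := hzS
        have h1 : c * (x * a) = (c * x) * a := (mul_assoc c x a).symm
        have hsym : ∀ u v : A, (LinearMap.trace k A) (LinearMap.mul k A (u * v)) =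
            (LinearMap.trace k A) (LinearMap.mul k A (v * u)) := by
          intro u v
          have hml : ∀ x : A, LinearMap.mul k A x = LinearMap.mulLeft k x :=
            fun x => LinearMap.ext fun y => by simp [LinearMap.mul_apply']
          rw [hml, hml, LinearMap.mulLeft_mul k A u v, LinearMap.mulLeft_mul k A v u]
          exact LinearMap.trace_mul_comm k _ _
        rw [h1, hsym (c * x) a]
        have hmem : a * (c * x) ∈ I := by
          have := I.smul_mem (a * c) hx
          simpa [smul_eq_mul, mul_assoc] using this
        simpa using hvanish _ hmem
      | zero => intro c; simp
      | add u v _ _ hu hv =>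
        intro c
        rw [mul_add, map_add, map_add, hu c, hv c, add_zero]
      | smul s u _ hu =>
        intro c
        have : c * (s • u) = (c * s) * u := by
          simp only [smul_eq_mul, mul_assoc]
        rw [this]
        exact hu (c * s)
    -- but lam 1 = finrank k A ≠ 0
    have h1 : (LinearMap.trace k A) (LinearMap.mul k A (1 * (1 : A))) = 0 :=
      hlamJ 1 (hJtop ▸ Submodule.mem_top) 1
    have h2 : (LinearMap.trace k A) (LinearMap.mul k A ((1 : A))) = (finrank k A : k) := by
      have : LinearMap.mul k A (1 : A) = LinearMap.mulLeft k (1 : A) := rfl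
      rw [this, LinearMap.mulLeft_one, LinearMap.trace_id]
    rw [one_mul, h2] at h1
    haveI : CharP k (ringChar k) := ringChar.charP k
    exact hchar ((CharP.cast_eq_zero_iff k (ringChar k) _).1 h1)
end

section
/- If k has characteristic zero, then every finite dimensional G-graded semisimple k-algebra is graded symmetric. -/
open Module

/-!
The functional is `λ a = tr (x ↦ x * a₁)`, the trace of right multiplication by the identity
component of `a`. It is symmetric because `(a b)₁ = a b_{g⁻¹}` and `(b a)₁ = b_{g⁻¹} a` for `a`
of degree `g`. If `I` is a graded left ideal with graded complement `J`, and `e ∈ I` is the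
component of `1` along `I`, then right multiplication by `e₁` still fixes the homogeneous elements
of `I` and kills those of `J`, so it is the projection onto `I` along `J` and `λ e = dim I`.
In characteristic zero `λ e = 0` thus forces `I = 0`.
-/

open DirectSum LinearMap

theorem LinearMap.trace_mulRight_mul_comm {R A : Type*} [CommRing R] [Ring A] [Algebra R A]
    [Module.Free R A] [Module.Finite R A] (a b : A) :
    trace R A (mulRight R (a * b)) = trace R A (mulRight R (b * a)) := by
  rw [mulRight_mul, mulRight_mul, ← Module.End.mul_eq_comp, ← Module.End.mul_eq_comp,
    trace_mul_comm]

theorem Submodule.projection_apply_eq_mul {A : Type*} [Ring A] {I J : Submodule A A}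
    (hIJ : IsCompl I J) (x : A) : I.projection J hIJ x = x * I.projection J hIJ 1 := by
  simpa using (I.projection J hIJ).map_smul x 1

theorem LinearMap.trace_mulRight_eq_finrank {k A : Type*} [Field k] [Ring A] [Algebra k A]
    [FiniteDimensional k A] {I J : Submodule A A} (hIJ : IsCompl I J) {e : A}
    (hI : ∀ x ∈ I, x * e = x) (hJ : ∀ x ∈ J, x * e = 0) :
    trace k A (mulRight k e) = finrank k (I.restrictScalars k) := by
  refine IsProj.trace ⟨fun x => ?_, fun x hx => hI x hx⟩
  have hx : x ∈ I ⊔ J := hIJ.sup_eq_top ▸ Submodule.mem_top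
  obtain ⟨i, hi, j, hj, rfl⟩ := Submodule.mem_sup.mp hx
  simpa [add_mul, hI i hi, hJ j hj] using hi

section Graded

variable {k A G : Type*} [CommRing k] [Ring A] [Algebra k A] [Group G] [DecidableEq G]
  (𝒜 : G → Submodule k A) [Decomposition 𝒜]

theorem coe_decompose_mul_mul_of_left_mem
    (hmul : ∀ {g h : G} {a b : A}, a ∈ 𝒜 g → b ∈ 𝒜 h → a * b ∈ 𝒜 (g * h))
    {g : G} {x : A} (hx : x ∈ 𝒜 g) (z : A) (h : G) :
    (decompose 𝒜 (x * z) (g * h) : A) = x * decompose 𝒜 z h := by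
  induction z using Decomposition.inductionOn 𝒜 with
  | zero => simp
  | @homogeneous h' m =>
    obtain ⟨y, hy⟩ := m
    obtain rfl | hne := eq_or_ne h h'
    · rw [decompose_of_mem_same 𝒜 (hmul hx hy), decompose_of_mem_same 𝒜 hy]
    · rw [decompose_of_mem_ne 𝒜 (hmul hx hy) (by simpa [eq_comm] using hne),
        decompose_of_mem_ne 𝒜 hy (Ne.symm hne), mul_zero]
  | add z z' hz hz' => simp [mul_add, hz, hz']

theorem coe_decompose_mul_mul_of_right_mem
    (hmul : ∀ {g h : G} {a b : A}, a ∈ 𝒜 g → b ∈ 𝒜 h → a * b ∈ 𝒜 (g * h))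
    {g : G} {x : A} (hx : x ∈ 𝒜 g) (z : A) (h : G) :
    (decompose 𝒜 (z * x) (h * g) : A) = decompose 𝒜 z h * x := by
  induction z using Decomposition.inductionOn 𝒜 with
  | zero => simp
  | @homogeneous h' m =>
    obtain ⟨y, hy⟩ := m
    obtain rfl | hne := eq_or_ne h h'
    · rw [decompose_of_mem_same 𝒜 (hmul hy hx), decompose_of_mem_same 𝒜 hy]
    · rw [decompose_of_mem_ne 𝒜 (hmul hy hx) (by simpa [eq_comm] using hne),
        decompose_of_mem_ne 𝒜 hy (Ne.symm hne), zero_mul]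
  | add z z' hz hz' => simp [add_mul, hz, hz']

theorem mul_coe_decompose_one
    (hmul : ∀ {g h : G} {a b : A}, a ∈ 𝒜 g → b ∈ 𝒜 h → a * b ∈ 𝒜 (g * h))
    {g : G} {x : A} (hx : x ∈ 𝒜 g) (z : A) :
    x * decompose 𝒜 z 1 = (decompose 𝒜 (x * z) g : A) := by
  rw [← coe_decompose_mul_mul_of_left_mem 𝒜 hmul hx z 1, mul_one]

noncomputable def gradedTrace : A →ₗ[k] k :=
  trace k A ∘ₗ (LinearMap.mul k A).flip ∘ₗ (𝒜 1).subtype ∘ₗ component k G (fun g => 𝒜 g) 1 ∘ₗ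
    (decomposeLinearEquiv 𝒜).toLinearMap

theorem gradedTrace_apply (a : A) :
    gradedTrace 𝒜 a = trace k A (mulRight k (decompose 𝒜 a 1 : A)) :=
  rfl

theorem gradedTrace_eq_zero_of_mem {g : G} (hg : g ≠ 1) {a : A} (ha : a ∈ 𝒜 g) :
    gradedTrace 𝒜 a = 0 := by
  simp [gradedTrace_apply, decompose_of_mem_ne 𝒜 ha hg]

theorem gradedTrace_mul_comm [Module.Free k A] [Module.Finite k A]
    (hmul : ∀ {g h : G} {a b : A}, a ∈ 𝒜 g → b ∈ 𝒜 h → a * b ∈ 𝒜 (g * h)) (a b : A) :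
    gradedTrace 𝒜 (a * b) = gradedTrace 𝒜 (b * a) := by
  induction a using Decomposition.inductionOn 𝒜 with
  | zero => simp
  | @homogeneous g m =>
    obtain ⟨x, hx⟩ := m
    have hxb := coe_decompose_mul_mul_of_left_mem 𝒜 hmul hx b g⁻¹
    have hbx := coe_decompose_mul_mul_of_right_mem 𝒜 hmul hx b g⁻¹
    rw [mul_inv_cancel] at hxb
    rw [inv_mul_cancel] at hbx
    rw [gradedTrace_apply, gradedTrace_apply, hxb, hbx, trace_mulRight_mul_comm]
  | add a a' ha ha' => simp [add_mul, mul_add, ha, ha']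

end Graded

namespace IsGradedLeftIdeal

variable {k A G : Type*} [Field k] [Ring A] [Algebra k A] {𝒜 : G → Submodule k A}
  {I : Submodule A A}

theorem le_of_homogeneous_mem (hI : IsGradedLeftIdeal 𝒜 I) {K : Submodule A A}
    (hK : ∀ g, ∀ x ∈ I, x ∈ 𝒜 g → x ∈ K) : I ≤ K := by
  rw [hI, Submodule.span_le]
  rintro x ⟨hxI, hx⟩
  obtain ⟨g, hxg⟩ := Set.mem_iUnion.mp hx
  exact hK g x hxI hxg

variable [Group G] [DecidableEq G] [Decomposition 𝒜]

theorem mul_decompose_one_eq_self (hI : IsGradedLeftIdeal 𝒜 I)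
    (hmul : ∀ {g h : G} {a b : A}, a ∈ 𝒜 g → b ∈ 𝒜 h → a * b ∈ 𝒜 (g * h))
    {e : A} (he : ∀ x ∈ I, x * e = x) : ∀ x ∈ I, x * decompose 𝒜 e 1 = x := by
  have hle : I ≤ eqLocus (toSpanSingleton A A (decompose 𝒜 e 1 : A)) LinearMap.id :=
    hI.le_of_homogeneous_mem fun g y hyI hyg => by
      simp [mul_coe_decompose_one 𝒜 hmul hyg, he y hyI, decompose_of_mem_same 𝒜 hyg]
  exact fun x hx => by simpa using hle hx

theorem mul_decompose_one_eq_zero (hI : IsGradedLeftIdeal 𝒜 I)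
    (hmul : ∀ {g h : G} {a b : A}, a ∈ 𝒜 g → b ∈ 𝒜 h → a * b ∈ 𝒜 (g * h))
    {e : A} (he : ∀ x ∈ I, x * e = 0) : ∀ x ∈ I, x * decompose 𝒜 e 1 = 0 := by
  have hle : I ≤ ker (toSpanSingleton A A (decompose 𝒜 e 1 : A)) :=
    hI.le_of_homogeneous_mem fun g y hyI hyg => by
      simp [mul_coe_decompose_one 𝒜 hmul hyg, he y hyI]
  exact fun x hx => by simpa using hle hx

theorem eq_bot_of_gradedTrace_eq_zero [CharZero k] [FiniteDimensional k A]
    (hI : IsGradedLeftIdeal 𝒜 I)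
    (hmul : ∀ {g h : G} {a b : A}, a ∈ 𝒜 g → b ∈ 𝒜 h → a * b ∈ 𝒜 (g * h))
    {J : Submodule A A} (hJ : IsGradedLeftIdeal 𝒜 J) (hIJ : IsCompl I J)
    (h0 : ∀ x ∈ I, gradedTrace 𝒜 x = 0) : I = ⊥ := by
  set e := I.projection J hIJ 1
  have heI : ∀ x ∈ I, x * e = x := fun x hx => by
    rw [← Submodule.projection_apply_eq_mul, Submodule.projection_apply_of_mem_left hIJ hx]
  have heJ : ∀ x ∈ J, x * e = 0 := fun x hx => by
    rw [← Submodule.projection_apply_eq_mul, Submodule.projection_apply_of_mem_right hIJ hx]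
  have htr := trace_mulRight_eq_finrank (k := k) hIJ (hI.mul_decompose_one_eq_self hmul heI)
    (hJ.mul_decompose_one_eq_zero hmul heJ)
  rwa [← gradedTrace_apply, h0 e (Submodule.projection_apply_mem hIJ 1), eq_comm,
    Nat.cast_eq_zero, Submodule.finrank_eq_zero, Submodule.restrictScalars_eq_bot_iff] at htr

end IsGradedLeftIdeal

theorem gradedSemisimple_isGradedSymmetric_of_charZero_general {k A G : Type*} [Field k]
    [CharZero k] [Ring A] [Algebra k A] [Group G] [DecidableEq G] [FiniteDimensional k A]
    (𝒜 : G → Submodule k A)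
    (hmul : ∀ {g h : G} {a b : A}, a ∈ 𝒜 g → b ∈ 𝒜 h → a * b ∈ 𝒜 (g * h))
    (hinternal : DirectSum.IsInternal 𝒜)
    (hss : ∀ I : Submodule A A, IsGradedLeftIdeal 𝒜 I →
      ∃ J : Submodule A A, IsGradedLeftIdeal 𝒜 J ∧ IsCompl I J) :
    IsGradedSymmetric 𝒜 := by
  let := hinternal.chooseDecomposition
  refine ⟨gradedTrace 𝒜, gradedTrace_mul_comm 𝒜 hmul,
    fun g hg a ha => gradedTrace_eq_zero_of_mem 𝒜 hg ha, fun I hI h0 => ?_⟩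
  obtain ⟨J, hJ, hIJ⟩ := hss I hI
  exact hI.eq_bot_of_gradedTrace_eq_zero hmul hJ hIJ h0

/-- In characteristic zero, every finite dimensional `G`-graded semisimple algebra
(i.e. every graded left ideal has a graded complement) is graded symmetric. -/
theorem gradedSemisimple_isGradedSymmetric_of_charZero {k A G : Type*} [Field k]
    [CharZero k] [Ring A] [Algebra k A] [Group G] [DecidableEq G] [FiniteDimensional k A]
    (𝒜 : G → Submodule k A)
    (hmul : ∀ {g h : G} {a b : A}, a ∈ 𝒜 g → b ∈ 𝒜 h → a * b ∈ 𝒜 (g * h))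
    (hone : (1 : A) ∈ 𝒜 1)
    (hinternal : DirectSum.IsInternal 𝒜)
    (hss : ∀ I : Submodule A A, IsGradedLeftIdeal 𝒜 I →
      ∃ J : Submodule A A, IsGradedLeftIdeal 𝒜 J ∧ IsCompl I J) :
    IsGradedSymmetric 𝒜 :=
  gradedSemisimple_isGradedSymmetric_of_charZero_general 𝒜 hmul hinternal hss
end

section
/- Let k be a field of characteristic ≠ 2 and let A be the 4-dimensional k-algebra generated by c, x with relations c² = 1, x² = 0, xc = -cx (the underlying algebra of Sweedler's Hopf algebra). Then Cen(A) = k and [A,A] is the 2-dimensional span of x and cx, so Cen(A ⊕ A*) ≅ k[u,v]/(u², uv, v²). -/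
open Module

section DualBimodule

variable (k A : Type*) [CommSemiring k] [Ring A] [Algebra k A]

/-- Left action of A on its k-dual: (a • f) x = f (x * a). -/
noncomputable instance dualSMulLeft : SMul A (Module.Dual k A) :=
  ⟨fun a f => f ∘ₗ LinearMap.mulRight k a⟩

/-- Right action of A on its k-dual: (op a • f) x = f (a * x). -/
noncomputable instance dualSMulRight : SMul Aᵐᵒᵖ (Module.Dual k A) :=
  ⟨fun a f => f ∘ₗ LinearMap.mulLeft k a.unop⟩

variable {k A}

theorem dual_smul_left_apply (a : A) (f : Module.Dual k A) (x : A) :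
    (a • f) x = f (x * a) := rfl

theorem dual_smul_right_apply (a : Aᵐᵒᵖ) (f : Module.Dual k A) (x : A) :
    (a • f) x = f (a.unop * x) := rfl

variable (k A)

/-- The k-dual of A as a left A-module. -/
noncomputable instance dualModuleLeft : Module A (Module.Dual k A) where
  one_smul f := by ext x; simp [dual_smul_left_apply]
  mul_smul a b f := by ext x; simp [dual_smul_left_apply, mul_assoc]
  smul_zero a := by ext x; simp [dual_smul_left_apply]
  smul_add a f g := by ext x; simp [dual_smul_left_apply]
  add_smul a b f := by ext x; simp [dual_smul_left_apply, mul_add]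
  zero_smul f := by ext x; simp [dual_smul_left_apply]

/-- The k-dual of A as a right A-module. -/
noncomputable instance dualModuleRight : Module Aᵐᵒᵖ (Module.Dual k A) where
  one_smul f := by ext x; simp [dual_smul_right_apply]
  mul_smul a b f := by ext x; simp [dual_smul_right_apply, mul_assoc]
  smul_zero a := by ext x; simp [dual_smul_right_apply]
  smul_add a f g := by ext x; simp [dual_smul_right_apply]
  add_smul a b f := by ext x; simp [dual_smul_right_apply, add_mul]
  zero_smul f := by ext x; simp [dual_smul_right_apply]

instance dualSMulCommClass : SMulCommClass A Aᵐᵒᵖ (Module.Dual k A) where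
  smul_comm a b f := by
    ext x
    simp only [dual_smul_left_apply, dual_smul_right_apply, mul_assoc]

end DualBimodule

set_option maxHeartbeats 2000000 in
set_option synthInstance.maxHeartbeats 200000 in
/-- For the 4-dimensional algebra A = k⟨c,x⟩ with c² = 1, x² = 0, xc = -cx (the
underlying algebra of Sweedler's Hopf algebra) over a field of characteristic ≠ 2,
the center of A is k, the commutator subspace is spanned by x and cx, and the center
of the trivial extension A ⊕ A* is isomorphic to k[u,v]/(u², uv, v²). -/
theorem sweedler_center_trivialExtension (k : Type*) [Field k] (hchar : ringChar k ≠ 2)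
    (A : Type*) [Ring A] [Algebra k A] (c x : A)
    (hc : c ^ 2 = 1) (hx : x ^ 2 = 0) (hxc : x * c = -(c * x))
    (b : Basis (Fin 4) k A) (hb : ⇑b = ![1, c, x, c * x]) :
    Subalgebra.center k A = ⊥ ∧
    Submodule.span k {w : A | ∃ a b : A, w = a * b - b * a} =
      Submodule.span k {x, c * x} ∧
    Nonempty (Subring.center (TrivSqZeroExt A (Module.Dual k A)) ≃+*
      (MvPolynomial (Fin 2) k ⧸ Ideal.span {(MvPolynomial.X 0 : MvPolynomial (Fin 2) k) ^ 2,
        MvPolynomial.X 0 * MvPolynomial.X 1, (MvPolynomial.X 1) ^ 2})) := by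
  classical
  have htwo : (2:k) ≠ 0 := Ring.two_ne_zero hchar
  have half : ∀ r : k, r = -r → r = 0 := by
    intro r h
    have h2 : (2:k) * r = 0 := by rw [two_mul]; linear_combination h
    exact (mul_eq_zero.1 h2).resolve_left htwo
  have hcc : c * c = 1 := by rw [← sq]; exact hc
  have hxx : x * x = 0 := by rw [← sq]; exact hx
  have h1 : c * (c * x) = x := by rw [← mul_assoc, hcc, one_mul]
  have h2 : (c * x) * c = -x := by rw [mul_assoc, hxc, mul_neg, ← mul_assoc, hcc, one_mul]
  have h3 : x * (c * x) = 0 := by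
    rw [← mul_assoc, hxc, neg_mul, mul_assoc, hxx, mul_zero, neg_zero]
  have h4 : (c * x) * x = 0 := by rw [mul_assoc, hxx, mul_zero]
  have hb0 : b 0 = 1 := by rw [hb]; rfl
  have hb1 : b 1 = c := by rw [hb]; rfl
  have hb2 : b 2 = x := by rw [hb]; rfl
  have hb3 : b 3 = c * x := by rw [hb]; rfl
  have r0 : b.repr (1:A) = Finsupp.single 0 1 := by rw [← hb0]; exact b.repr_self 0
  have r1 : b.repr c = Finsupp.single 1 1 := by rw [← hb1]; exact b.repr_self 1
  have r2 : b.repr x = Finsupp.single 2 1 := by rw [← hb2]; exact b.repr_self 2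
  have r3 : b.repr (c*x) = Finsupp.single 3 1 := by rw [← hb3]; exact b.repr_self 3
  set S : Submodule k A := Submodule.span k {x, c * x} with hS
  have hxS : x ∈ S := Submodule.subset_span (Set.mem_insert _ _)
  have hcxS : c * x ∈ S := Submodule.subset_span (Set.mem_insert_of_mem _ rfl)
  have hbasis_comm : ∀ i j : Fin 4, b i * b j - b j * b i ∈ S := by
    intro i j
    fin_cases i <;> fin_cases j <;>
      simp [hb, hcc, hxx, hxc, h1, h2, h3, h4, sub_neg_eq_add] <;>
      first
        | exact S.zero_mem
        | exact add_mem hxS hxS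
        | exact add_mem hcxS hcxS
        | exact S.neg_mem (add_mem hxS hxS)
        | exact S.neg_mem (add_mem hcxS hcxS)
        | exact sub_mem (S.neg_mem hxS) hxS
        | exact sub_mem (S.neg_mem hcxS) hcxS
  have hbtop : ∀ a : A, a ∈ Submodule.span k (Set.range ⇑b) := by
    intro a; rw [b.span_eq]; exact Submodule.mem_top
  have step1 : ∀ (i : Fin 4) (a : A), b i * a - a * b i ∈ S := by
    intro i a
    have hle : Submodule.span k (Set.range ⇑b) ≤
        Submodule.comap (LinearMap.mulLeft k (b i) - LinearMap.mulRight k (b i)) S := by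
      rw [Submodule.span_le]
      rintro _ ⟨j, rfl⟩
      simpa using hbasis_comm i j
    simpa using hle (hbtop a)
  have hcomm : ∀ a a' : A, a * a' - a' * a ∈ S := by
    intro a a'
    have hle : Submodule.span k (Set.range ⇑b) ≤
        Submodule.comap (LinearMap.mulRight k a' - LinearMap.mulLeft k a') S := by
      rw [Submodule.span_le]
      rintro _ ⟨i, rfl⟩
      simpa using step1 i a'
    simpa using hle (hbtop a)
  have hpart2 : Submodule.span k {w : A | ∃ a b : A, w = a * b - b * a} =
      Submodule.span k {x, c * x} := by
    apply le_antisymm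
    · rw [Submodule.span_le]
      rintro w ⟨a, a', rfl⟩
      exact hcomm a a'
    · have hxmem : x ∈ Submodule.span k {w : A | ∃ a b : A, w = a * b - b * a} := by
        have e : c * (c*x) - (c*x) * c = x + x := by rw [h1, h2, sub_neg_eq_add]
        have e2 : x = (2⁻¹ : k) • (c * (c*x) - (c*x) * c) := by
          rw [e, ← two_smul k x, smul_smul, inv_mul_cancel₀ htwo, one_smul]
        rw [e2]
        exact Submodule.smul_mem _ _ (Submodule.subset_span ⟨c, c*x, rfl⟩)
      have hcxmem : c * x ∈ Submodule.span k {w : A | ∃ a b : A, w = a * b - b * a} := by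
        have e : c * x - x * c = c * x + c * x := by rw [hxc, sub_neg_eq_add]
        have e2 : c * x = (2⁻¹ : k) • (c * x - x * c) := by
          rw [e, ← two_smul k (c*x), smul_smul, inv_mul_cancel₀ htwo, one_smul]
        rw [e2]
        exact Submodule.smul_mem _ _ (Submodule.subset_span ⟨c, x, rfl⟩)
      rw [Submodule.span_le]
      intro w hw
      rw [Set.mem_insert_iff, Set.mem_singleton_iff] at hw
      rcases hw with rfl | rfl
      · exact hxmem
      · exact hcxmem
  have hpart1 : Subalgebra.center k A = ⊥ := by
    refine le_antisymm ?_ bot_le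
    intro a ha
    rw [Subalgebra.mem_center_iff] at ha
    have hrep : a = b.repr a 0 • 1 + b.repr a 1 • c + b.repr a 2 • x
        + b.repr a 3 • (c*x) := by
      have h := b.sum_repr a
      rw [Fin.sum_univ_four, hb0, hb1, hb2, hb3] at h
      exact h.symm
    have hca : c * a = b.repr a 0 • c + b.repr a 1 • 1 + b.repr a 2 • (c*x)
        + b.repr a 3 • x := by
      nth_rewrite 1 [hrep]
      simp only [mul_add, mul_smul_comm, mul_one, hcc, h1]
    have hac : a * c = b.repr a 0 • c + b.repr a 1 • 1 + -(b.repr a 2 • (c*x))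
        + -(b.repr a 3 • x) := by
      nth_rewrite 1 [hrep]
      simp only [add_mul, smul_mul_assoc, one_mul, hcc, hxc, h2, smul_neg]
    have heq := ha c
    rw [hca, hac] at heq
    have e3 : b.repr a 3 = 0 := by
      have h := congrArg (fun z => b.repr z 2) heq
      simp only [map_add, map_smul, map_neg, r0, r1, r2, r3] at h
      simp [Finsupp.single_apply] at h
      exact half _ h
    have e2 : b.repr a 2 = 0 := by
      have h := congrArg (fun z => b.repr z 3) heq
      simp only [map_add, map_smul, map_neg, r0, r1, r2, r3] at h
      simp [Finsupp.single_apply] at h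
      exact half _ h
    have hxa : x * a = b.repr a 0 • x + -(b.repr a 1 • (c*x)) := by
      nth_rewrite 1 [hrep]
      simp only [mul_add, mul_smul_comm, mul_one, hxc, hxx, h3, smul_zero, add_zero, smul_neg]
    have hax : a * x = b.repr a 0 • x + b.repr a 1 • (c*x) := by
      nth_rewrite 1 [hrep]
      simp only [add_mul, smul_mul_assoc, one_mul, hxx, h4, smul_zero, add_zero]
    have heqx := ha x
    rw [hxa, hax] at heqx
    have e1 : b.repr a 1 = 0 := by
      have h := congrArg (fun z => b.repr z 3) heqx
      simp only [map_add, map_smul, map_neg, r0, r1, r2, r3] at h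
      simp [Finsupp.single_apply] at h
      exact half _ h.symm
    rw [Algebra.mem_bot]
    refine ⟨b.repr a 0, ?_⟩
    have ha' : a = b.repr a 0 • 1 := by
      nth_rewrite 1 [hrep]
      rw [e1, e2, e3]
      simp
    rw [Algebra.algebraMap_eq_smul_one]
    exact ha'.symm
  refine ⟨hpart1, hpart2, ?_⟩
  set f0 : Module.Dual k A := b.coord 0 with hf0
  set f1 : Module.Dual k A := b.coord 1 with hf1
  have hf0x : f0 x = 0 := by simp [hf0, Basis.coord_apply, r2, Finsupp.single_apply]
  have hf0cx : f0 (c*x) = 0 := by simp [hf0, Basis.coord_apply, r3, Finsupp.single_apply]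
  have hf1x : f1 x = 0 := by simp [hf1, Basis.coord_apply, r2, Finsupp.single_apply]
  have hf1cx : f1 (c*x) = 0 := by simp [hf1, Basis.coord_apply, r3, Finsupp.single_apply]
  have hf01 : f0 (1:A) = 1 := by simp [hf0, Basis.coord_apply, r0, Finsupp.single_apply]
  have hf11 : f1 (1:A) = 0 := by simp [hf1, Basis.coord_apply, r0, Finsupp.single_apply]
  have hf0c : f0 c = 0 := by simp [hf0, Basis.coord_apply, r1, Finsupp.single_apply]
  have hf1c : f1 c = 1 := by simp [hf1, Basis.coord_apply, r1, Finsupp.single_apply]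
  have hvanish : ∀ (f : Module.Dual k A), f x = 0 → f (c*x) = 0 →
      ∀ (a y : A), f (y * a) = f (a * y) := by
    intro f hfx hfcx a y
    have hle : S ≤ LinearMap.ker f := by
      rw [hS, Submodule.span_le]
      intro w hw
      rw [Set.mem_insert_iff, Set.mem_singleton_iff] at hw
      rcases hw with rfl | rfl
      · simpa [LinearMap.mem_ker] using hfx
      · simpa [LinearMap.mem_ker] using hfcx
    have h0 : f (y * a - a * y) = 0 := LinearMap.mem_ker.1 (hle (hcomm y a))
    rw [map_sub] at h0
    exact sub_eq_zero.1 h0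
  have hcentralInr : ∀ (f : Module.Dual k A), f x = 0 → f (c*x) = 0 →
      (TrivSqZeroExt.inr f : TrivSqZeroExt A (Module.Dual k A)) ∈
        Subring.center (TrivSqZeroExt A (Module.Dual k A)) := by
    intro f hfx hfcx
    rw [Subring.mem_center_iff]
    intro g
    refine TrivSqZeroExt.ext ?_ ?_
    · simp
    · simp only [TrivSqZeroExt.snd_mul, TrivSqZeroExt.snd_inr, TrivSqZeroExt.fst_inr,
        MulOpposite.op_zero, zero_smul, smul_zero, add_zero, zero_add]
      refine LinearMap.ext fun y => ?_
      show (g.fst • f) y = (MulOpposite.op g.fst • f) y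
      rw [dual_smul_left_apply, dual_smul_right_apply, MulOpposite.unop_op]
      exact hvanish f hfx hfcx g.fst y
  have hcentralInl : ∀ r : k, (TrivSqZeroExt.inl (algebraMap k A r) :
      TrivSqZeroExt A (Module.Dual k A)) ∈
        Subring.center (TrivSqZeroExt A (Module.Dual k A)) := by
    intro r
    rw [Subring.mem_center_iff]
    intro g
    refine TrivSqZeroExt.ext ?_ ?_
    · simpa using (Algebra.commutes r g.fst).symm
    · simp only [TrivSqZeroExt.snd_mul, TrivSqZeroExt.snd_inl, TrivSqZeroExt.fst_inl,
        MulOpposite.op_zero, zero_smul, smul_zero, add_zero, zero_add]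
      refine LinearMap.ext fun y => ?_
      show (MulOpposite.op (algebraMap k A r) • g.snd) y = (algebraMap k A r • g.snd) y
      rw [dual_smul_left_apply, dual_smul_right_apply, MulOpposite.unop_op]
      rw [Algebra.commutes r y]
  have hz0 := hcentralInr f0 hf0x hf0cx
  have hz1 := hcentralInr f1 hf1x hf1cx
  set Z := Subring.center (TrivSqZeroExt A (Module.Dual k A)) with hZ
  set χ : k →+* Z := RingHom.codRestrict
    ((TrivSqZeroExt.inlHom A (Module.Dual k A)).comp (algebraMap k A)) Z
    (fun r => hcentralInl r) with hχ
  set zf : Fin 2 → Z := ![⟨TrivSqZeroExt.inr f0, hz0⟩, ⟨TrivSqZeroExt.inr f1, hz1⟩] with hzf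
  set ψ : MvPolynomial (Fin 2) k →+* Z := MvPolynomial.eval₂Hom χ zf with hψ
  set I : Ideal (MvPolynomial (Fin 2) k) :=
    Ideal.span {(MvPolynomial.X 0 : MvPolynomial (Fin 2) k) ^ 2,
      MvPolynomial.X 0 * MvPolynomial.X 1, (MvPolynomial.X 1) ^ 2} with hI
  have hzz : ∀ i j : Fin 2, zf i * zf j = 0 := by
    intro i j
    fin_cases i <;> fin_cases j <;>
      · apply Subtype.ext
        simp [hzf]
  have hker : ∀ p ∈ I, ψ p = 0 := by
    have hle : I ≤ RingHom.ker ψ := by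
      rw [hI, Ideal.span_le]
      intro q hq
      simp only [Set.mem_insert_iff, Set.mem_singleton_iff] at hq
      rw [SetLike.mem_coe, RingHom.mem_ker]
      rcases hq with rfl | rfl | rfl <;>
        simp [hψ, sq, MvPolynomial.eval₂Hom_X', hzz]
    intro p hp
    exact RingHom.mem_ker.1 (hle hp)
  have hmkXX : ∀ i j : Fin 2, Ideal.Quotient.mk I (MvPolynomial.X i)
      * Ideal.Quotient.mk I (MvPolynomial.X j) = 0 := by
    intro i j
    rw [← map_mul, Ideal.Quotient.eq_zero_iff_mem]
    fin_cases i <;> fin_cases j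
    · rw [← sq]; exact Ideal.subset_span (Set.mem_insert _ _)
    · exact Ideal.subset_span (Set.mem_insert_of_mem _ (Set.mem_insert _ _))
    · rw [mul_comm]; exact Ideal.subset_span (Set.mem_insert_of_mem _ (Set.mem_insert _ _))
    · rw [← sq]; exact Ideal.subset_span
        (Set.mem_insert_of_mem _ (Set.mem_insert_of_mem _ rfl))
  have keylin : ∀ p : MvPolynomial (Fin 2) k, ∃ a0 a1 a2 : k,
      Ideal.Quotient.mk I p = Ideal.Quotient.mk I (MvPolynomial.C a0
        + MvPolynomial.C a1 * MvPolynomial.X 0 + MvPolynomial.C a2 * MvPolynomial.X 1) := by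
    intro p
    induction p using MvPolynomial.induction_on with
    | C a => exact ⟨a, 0, 0, by simp⟩
    | add p q hp hq =>
      obtain ⟨a0, a1, a2, hp⟩ := hp
      obtain ⟨b0, b1, b2, hq⟩ := hq
      refine ⟨a0 + b0, a1 + b1, a2 + b2, ?_⟩
      rw [map_add, hp, hq, ← map_add]
      exact congrArg _ (by simp only [map_add]; ring)
    | mul_X p n hp =>
      obtain ⟨a0, a1, a2, hp⟩ := hp
      have key : Ideal.Quotient.mk I (p * MvPolynomial.X n)
          = Ideal.Quotient.mk I (MvPolynomial.C a0 * MvPolynomial.X n) := by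
        rw [map_mul, hp]
        simp only [map_add, map_mul, add_mul, mul_assoc, hmkXX, mul_zero, add_zero]
      fin_cases n
      · exact ⟨0, a0, 0, by rw [key]; exact congrArg _ (by simp)⟩
      · exact ⟨0, 0, a0, by rw [key]; exact congrArg _ (by simp)⟩
  set L : (MvPolynomial (Fin 2) k ⧸ I) →+* Z := Ideal.Quotient.lift I ψ hker with hL
  have halg : ∀ (r : k) (f : Module.Dual k A), (algebraMap k A r) • f = r • f := by
    intro r f
    refine LinearMap.ext fun y => ?_
    rw [dual_smul_left_apply, ← Algebra.commutes r y, ← Algebra.smul_def, map_smul]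
    rfl
  have hψlin : ∀ a0 a1 a2 : k, ((ψ (MvPolynomial.C a0
      + MvPolynomial.C a1 * MvPolynomial.X 0 + MvPolynomial.C a2 * MvPolynomial.X 1) : Z)
        : TrivSqZeroExt A (Module.Dual k A))
      = TrivSqZeroExt.inl (algebraMap k A a0) + TrivSqZeroExt.inr (a1 • f0 + a2 • f1) := by
    intro a0 a1 a2
    have e0 : ψ (MvPolynomial.C a0 + MvPolynomial.C a1 * MvPolynomial.X 0
        + MvPolynomial.C a2 * MvPolynomial.X 1) = χ a0 + χ a1 * zf 0 + χ a2 * zf 1 := by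
      simp [hψ, MvPolynomial.eval₂Hom_X']
    rw [e0]
    push_cast
    have cχ : ∀ r : k, ((χ r : Z) : TrivSqZeroExt A (Module.Dual k A))
        = TrivSqZeroExt.inl (algebraMap k A r) := fun r => rfl
    have cz0 : ((zf 0 : Z) : TrivSqZeroExt A (Module.Dual k A)) = TrivSqZeroExt.inr f0 := rfl
    have cz1 : ((zf 1 : Z) : TrivSqZeroExt A (Module.Dual k A)) = TrivSqZeroExt.inr f1 := rfl
    rw [cχ, cχ, cχ, cz0, cz1, TrivSqZeroExt.inl_mul_inr, TrivSqZeroExt.inl_mul_inr,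
      halg, halg, add_assoc, ← TrivSqZeroExt.inr_add]
  have hinj : Function.Injective L := by
    rw [injective_iff_map_eq_zero]
    intro q hq
    obtain ⟨p, rfl⟩ := Ideal.Quotient.mk_surjective q
    obtain ⟨a0, a1, a2, hp⟩ := keylin p
    rw [hp] at hq ⊢
    rw [hL, Ideal.Quotient.lift_mk] at hq
    have hcoe := congrArg
      (fun z : Z => (z : TrivSqZeroExt A (Module.Dual k A))) hq
    simp only [ZeroMemClass.coe_zero] at hcoe
    rw [hψlin] at hcoe
    have hfst := congrArg TrivSqZeroExt.fst hcoe
    have hsnd := congrArg TrivSqZeroExt.snd hcoe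
    simp only [TrivSqZeroExt.fst_add, TrivSqZeroExt.fst_inl, TrivSqZeroExt.fst_inr,
      add_zero, TrivSqZeroExt.fst_zero] at hfst
    simp only [TrivSqZeroExt.snd_add, TrivSqZeroExt.snd_inl, TrivSqZeroExt.snd_inr,
      zero_add, TrivSqZeroExt.snd_zero] at hsnd
    have ha0 : a0 = 0 := by
      have h := congrArg (fun z => b.repr z 0) hfst
      simpa [Algebra.algebraMap_eq_smul_one, r0, Finsupp.single_apply] using h
    have ha1 : a1 = 0 := by
      have h := congrArg (fun m : Module.Dual k A => m (1:A)) hsnd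
      simpa [hf01, hf11] using h
    have ha2 : a2 = 0 := by
      have h := congrArg (fun m : Module.Dual k A => m c) hsnd
      simpa [hf0c, hf1c] using h
    rw [ha0, ha1, ha2]
    simp
  have hsurj : Function.Surjective L := by
    rintro ⟨g, hg⟩
    rw [Subring.mem_center_iff] at hg
    have hgf : g.fst ∈ Subalgebra.center k A := by
      rw [Subalgebra.mem_center_iff]
      intro a
      have h := congrArg TrivSqZeroExt.fst (hg (TrivSqZeroExt.inl a))
      simpa using h
    rw [hpart1, Algebra.mem_bot] at hgf
    obtain ⟨α, hα⟩ := hgf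
    have hsym : ∀ y : A, g.snd (y * c) = g.snd (c * y) := by
      intro y
      have h := congrArg TrivSqZeroExt.snd (hg (TrivSqZeroExt.inl c))
      simp only [TrivSqZeroExt.snd_mul, TrivSqZeroExt.snd_inl, TrivSqZeroExt.fst_inl,
        MulOpposite.op_zero, zero_smul, smul_zero, add_zero, zero_add] at h
      have h2 := congrArg (fun m : Module.Dual k A => m y) h
      simpa [dual_smul_left_apply, dual_smul_right_apply] using h2
    have hmx : g.snd x = 0 := by
      have h := hsym (c * x)
      rw [h2, h1, map_neg] at h
      exact half _ h.symm
    have hmcx : g.snd (c * x) = 0 := by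
      have h := hsym x
      rw [hxc, map_neg] at h
      exact half _ h.symm
    have hm : g.snd = g.snd 1 • f0 + g.snd c • f1 := by
      refine b.ext fun i => ?_
      fin_cases i <;>
        simp [hb, hf0, hf1, Basis.coord_apply, r0, r1, r2, r3, Finsupp.single_apply,
          hmx, hmcx]
    refine ⟨Ideal.Quotient.mk I (MvPolynomial.C α + MvPolynomial.C (g.snd 1) * MvPolynomial.X 0
      + MvPolynomial.C (g.snd c) * MvPolynomial.X 1), ?_⟩
    rw [hL, Ideal.Quotient.lift_mk]
    apply Subtype.ext
    rw [hψlin]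
    refine (TrivSqZeroExt.ext ?_ ?_ :
      _ = (⟨g, ?_⟩ : Z).val)
    · simpa using hα
    · simpa using hm.symm
  exact ⟨(RingEquiv.ofBijective L ⟨hinj, hsurj⟩).symm⟩
end
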